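/- arXiv:1610.01400 — 7 statements merged into one kernel-verified Lean document; each statement's English description precedes it below -/
import Mathlib

section
/- For any P in the transport polytope 𝒫(a,b) with cost C_{ij} = 2(1 - δ_{ij}) minimizing ⟨P,C⟩, the diagonal entries satisfy P_{ii} = min(a_i, b_i) for all i. -/
/-!
Since every off-diagonal entry costs `2`, the cost of a plan `P` of total mass `s` is
`2 * (s - trace P)`, so minimizers are exactly the plans of maximal trace. The marginals force
`P i i ≤ min (a i) (b i)`, and this bound is attained simultaneously for all `i` by the plan
`diagonal (a ⊓ b)` plus the product coupling of the leftover marginals `a - a ⊓ b` and `b - a ⊓ b`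
(whose diagonal vanishes, as at each `i` one of the two leftovers is `0`). Hence a minimizer has
`∑ i, P i i = ∑ i, min (a i) (b i)` with termwise `≤`, which forces equality termwise.
-/

open Finset Matrix

variable {ι : Type*} [Fintype ι]

lemma sum_inv_mul_sum_mul_of_nonneg {w : ι → ℝ} (hw : ∀ i, 0 ≤ w i) (i : ι) :
    (∑ k, w k)⁻¹ * (∑ k, w k) * w i = w i := by
  rcases eq_or_ne (∑ k, w k) 0 with h | h
  · simp [(sum_eq_zero_iff_of_nonneg fun k _ => hw k).1 h i (mem_univ i)]
  · rw [inv_mul_cancel₀ h, one_mul]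

noncomputable def productCoupling (u v : ι → ℝ) : Matrix ι ι ℝ :=
  (∑ k, u k)⁻¹ • vecMulVec u v

lemma productCoupling_apply (u v : ι → ℝ) (i j : ι) :
    productCoupling u v i j = (∑ k, u k)⁻¹ * (u i * v j) := rfl

lemma productCoupling_nonneg {u v : ι → ℝ} (hu : ∀ i, 0 ≤ u i) (hv : ∀ i, 0 ≤ v i) (i j : ι) :
    0 ≤ productCoupling u v i j :=
  mul_nonneg (inv_nonneg.2 (sum_nonneg fun k _ => hu k)) (mul_nonneg (hu i) (hv j))

lemma sum_productCoupling_row {u v : ι → ℝ} (hu : ∀ i, 0 ≤ u i)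
    (huv : ∑ i, u i = ∑ i, v i) (i : ι) :
    ∑ j, productCoupling u v i j = u i := by
  simp only [productCoupling_apply, ← mul_sum, ← huv]
  rw [← mul_assoc, mul_right_comm, sum_inv_mul_sum_mul_of_nonneg hu]

lemma sum_productCoupling_col {u v : ι → ℝ} (hv : ∀ i, 0 ≤ v i)
    (huv : ∑ i, u i = ∑ i, v i) (j : ι) :
    ∑ i, productCoupling u v i j = v j := by
  simp only [productCoupling_apply, ← sum_mul, ← mul_sum, huv]
  rw [← mul_assoc, sum_inv_mul_sum_mul_of_nonneg hv]

lemma diag_le_min_of_marginals {P : Matrix ι ι ℝ} {a b : ι → ℝ} (hP : ∀ i j, 0 ≤ P i j)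
    (hProw : ∀ i, ∑ j, P i j = a i) (hPcol : ∀ j, ∑ i, P i j = b j) (i : ι) :
    P i i ≤ min (a i) (b i) :=
  le_min (hProw i ▸ single_le_sum (fun j _ => hP i j) (mem_univ i))
    (hPcol i ▸ single_le_sum (fun j _ => hP j i) (mem_univ i))

variable [DecidableEq ι]

lemma exists_coupling_diag_eq_min {a b : ι → ℝ} (ha : ∀ i, 0 ≤ a i) (hb : ∀ i, 0 ≤ b i)
    (hmass : ∑ i, a i = ∑ i, b i) :
    ∃ Q : Matrix ι ι ℝ, (∀ i j, 0 ≤ Q i j) ∧ (∀ i, ∑ j, Q i j = a i) ∧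
      (∀ j, ∑ i, Q i j = b j) ∧ ∀ i, Q i i = min (a i) (b i) := by
  set m : ι → ℝ := fun i => min (a i) (b i)
  have hu : ∀ i, 0 ≤ (a - m) i := fun i => sub_nonneg.2 (min_le_left _ _)
  have hv : ∀ i, 0 ≤ (b - m) i := fun i => sub_nonneg.2 (min_le_right _ _)
  have huv : ∑ i, (a - m) i = ∑ i, (b - m) i := by
    simp only [Pi.sub_apply, sum_sub_distrib, hmass]
  refine ⟨diagonal m + productCoupling (a - m) (b - m), fun i j => ?_, fun i => ?_,
    fun j => ?_, fun i => ?_⟩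
  · refine add_nonneg ?_ (productCoupling_nonneg hu hv i j)
    by_cases hij : i = j
    · simp [hij, m, ha j, hb j]
    · simp [hij]
  · simp only [Matrix.add_apply, sum_add_distrib, sum_productCoupling_row hu huv, diagonal_apply,
      sum_ite_eq, mem_univ, if_true, Pi.sub_apply, add_sub_cancel]
  · simp only [Matrix.add_apply, sum_add_distrib, sum_productCoupling_col hv huv, diagonal_apply,
      sum_ite_eq', mem_univ, if_true, Pi.sub_apply, add_sub_cancel]
  · have hleftover : (a - m) i * (b - m) i = 0 := by
      rcases min_choice (a i) (b i) with h | h <;> simp [m, h]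
    rw [Matrix.add_apply, diagonal_apply_eq, productCoupling_apply, hleftover, mul_zero, add_zero]

lemma sum_sum_mul_offDiag_two (R : Matrix ι ι ℝ) :
    ∑ i, ∑ j, R i j * (if i = j then (0 : ℝ) else 2) = 2 * (∑ i, ∑ j, R i j - R.trace) := by
  have hrow : ∀ i, ∑ j, R i j * (if i = j then (0 : ℝ) else 2)
      = 2 * ∑ j, R i j - 2 * R i i := by
    intro i
    rw [mul_sum, ← sum_erase_add _ _ (mem_univ i), ← sum_erase_add _ _ (mem_univ i)]
    rw [sum_congr rfl fun j hj => by rw [if_neg (ne_of_mem_erase hj).symm]]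
    simp only [if_true, mul_zero, add_zero]
    rw [sum_congr rfl fun j _ => mul_comm (R i j) 2]
    ring
  simp only [hrow, ← sum_sub_distrib, trace, diag_apply, mul_sub, mul_sum]

theorem stmt_1_general (M : ℕ) (a b : Fin M → ℝ)
    (P : Matrix (Fin M) (Fin M) ℝ)
    (hP : ∀ i j, 0 ≤ P i j)
    (hProw : ∀ i, ∑ j, P i j = a i)
    (hPcol : ∀ j, ∑ i, P i j = b j)
    (hmin : ∀ Q : Matrix (Fin M) (Fin M) ℝ,
      (∀ i j, 0 ≤ Q i j) → (∀ i, ∑ j, Q i j = a i) → (∀ j, ∑ i, Q i j = b j) →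
      ∑ i, ∑ j, P i j * (if i = j then (0 : ℝ) else 2) ≤
        ∑ i, ∑ j, Q i j * (if i = j then (0 : ℝ) else 2)) :
    ∀ i, P i i = min (a i) (b i) := by
  have ha : ∀ i, 0 ≤ a i := fun i => hProw i ▸ sum_nonneg fun j _ => hP i j
  have hb : ∀ j, 0 ≤ b j := fun j => hPcol j ▸ sum_nonneg fun i _ => hP i j
  have hmass : ∑ i, a i = ∑ i, b i := by simp only [← hProw, ← hPcol]; exact sum_comm
  obtain ⟨Q, hQ, hQrow, hQcol, hQdiag⟩ := exists_coupling_diag_eq_min ha hb hmass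
  have htrace : Q.trace ≤ P.trace := by
    have hcost := hmin Q hQ hQrow hQcol
    simp only [sum_sum_mul_offDiag_two, hProw, hQrow] at hcost
    linarith
  have hdiag_le := diag_le_min_of_marginals hP hProw hPcol
  have hsum : ∑ i, P i i = ∑ i, min (a i) (b i) :=
    le_antisymm (sum_le_sum fun i _ => hdiag_le i) (by simpa [trace, hQdiag] using htrace)
  exact fun i => (sum_eq_sum_iff_of_le fun i _ => hdiag_le i).1 hsum i (mem_univ i)

/-- Any minimizer `P` of the transport cost with
`C i j = 2 (1 - δ_{ij})` satisfies `P i i = min (a i) (b i)`. -/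
theorem stmt_1 (M : ℕ) (a b : Fin M → ℝ)
    (ha : ∀ i, 0 ≤ a i) (hb : ∀ i, 0 ≤ b i)
    (hmass : ∑ i, a i = ∑ i, b i)
    (P : Matrix (Fin M) (Fin M) ℝ)
    (hP : ∀ i j, 0 ≤ P i j)
    (hProw : ∀ i, ∑ j, P i j = a i)
    (hPcol : ∀ j, ∑ i, P i j = b j)
    (hmin : ∀ Q : Matrix (Fin M) (Fin M) ℝ,
      (∀ i j, 0 ≤ Q i j) → (∀ i, ∑ j, Q i j = a i) → (∀ j, ∑ i, Q i j = b j) →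
      ∑ i, ∑ j, P i j * (if i = j then (0 : ℝ) else 2) ≤
        ∑ i, ∑ j, Q i j * (if i = j then (0 : ℝ) else 2)) :
    ∀ i, P i i = min (a i) (b i) :=
  stmt_1_general M a b P hP hProw hPcol hmin
end

section
/- The function MK(α) equals sup over β with Lβ ≤ c of ⟨α, β⟩ (linear programming duality for the optimal transport linear program). -/
/-!
Farkas' lemma applied to the cone of triples `(a, b, t)` for which some coupling of `a` and `b`
costs at most `t`. This cone is closed: couplings are bounded entrywise by their marginals, so a
compactness argument passes to the limit. If `t` is below the optimal cost, `(a, b, t)` lies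
outside the cone, and a functional `f ≥ 0` on the cone with `f (a, b, t) < 0` yields, through its
values `-φ i`, `-ψ j`, `γ` on the coordinate vectors, potentials with `φ i + ψ j ≤ γ * C i j` and
`⟨a, φ⟩ + ⟨b, ψ⟩ > γ * t`. Feasibility of the primal problem forces `γ > 0`, and `(φ, ψ) / γ` is
dual feasible with value above `t`.
-/

namespace OptimalTransport

variable {ι κ : Type*} [Fintype ι] [Fintype κ]

def IsCoupling (a : ι → ℝ) (b : κ → ℝ) (P : Matrix ι κ ℝ) : Prop :=
  (∀ i j, 0 ≤ P i j) ∧ (∀ i, ∑ j, P i j = a i) ∧ (∀ j, ∑ i, P i j = b j)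

def transportCost (C P : Matrix ι κ ℝ) : ℝ :=
  ∑ i, ∑ j, P i j * C i j

def dualValue (a : ι → ℝ) (b : κ → ℝ) (φ : ι → ℝ) (ψ : κ → ℝ) : ℝ :=
  (∑ i, a i * φ i) + (∑ j, b j * ψ j)

section Coupling

variable {a a' : ι → ℝ} {b b' : κ → ℝ} {P Q : Matrix ι κ ℝ}

theorem IsCoupling.zero : IsCoupling (0 : ι → ℝ) (0 : κ → ℝ) 0 :=
  ⟨fun _ _ => le_rfl, by simp, by simp⟩

theorem IsCoupling.add (hP : IsCoupling a b P) (hQ : IsCoupling a' b' Q) :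
    IsCoupling (a + a') (b + b') (P + Q) :=
  ⟨fun i j => add_nonneg (hP.1 i j) (hQ.1 i j),
    fun i => by simp [Finset.sum_add_distrib, hP.2.1, hQ.2.1],
    fun j => by simp [Finset.sum_add_distrib, hP.2.2, hQ.2.2]⟩

theorem IsCoupling.smul (hP : IsCoupling a b P) {c : ℝ} (hc : 0 ≤ c) :
    IsCoupling (c • a) (c • b) (c • P) :=
  ⟨fun i j => mul_nonneg hc (hP.1 i j),
    fun i => by simp [← Finset.mul_sum, hP.2.1],
    fun j => by simp [← Finset.mul_sum, hP.2.2]⟩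

theorem isCoupling_single [DecidableEq ι] [DecidableEq κ] (i : ι) (j : κ) :
    IsCoupling (Pi.single i 1) (Pi.single j 1) (Matrix.single i j (1 : ℝ)) :=
  ⟨fun i' j' => by by_cases h : i = i' ∧ j = j' <;> simp [h],
    fun i' => by simp [Matrix.single_apply, Pi.single_apply, ite_and, eq_comm],
    fun j' => by simp [Matrix.single_apply, Pi.single_apply, ite_and, eq_comm]⟩

theorem IsCoupling.apply_le_left (hP : IsCoupling a b P) (i : ι) (j : κ) : P i j ≤ a i :=
  hP.2.1 i ▸ Finset.single_le_sum (fun j' _ => hP.1 i j') (Finset.mem_univ j)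

theorem exists_isCoupling (ha : ∀ i, 0 ≤ a i) (hb : ∀ j, 0 ≤ b j)
    (hmass : ∑ i, a i = ∑ j, b j) : ∃ P, IsCoupling a b P := by
  rcases eq_or_ne (∑ i, a i) 0 with hm | hm
  · have ha0 := (Finset.sum_eq_zero_iff_of_nonneg fun i _ => ha i).1 hm
    have hb0 := (Finset.sum_eq_zero_iff_of_nonneg fun j _ => hb j).1 (hmass ▸ hm)
    exact ⟨0, fun _ _ => le_rfl, fun i => by simp [ha0 i], fun j => by simp [hb0 j]⟩
  · refine ⟨fun i j => a i * b j / ∑ k, a k,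
      fun i j => div_nonneg (mul_nonneg (ha i) (hb j)) (Finset.sum_nonneg fun k _ => ha k),
      fun i => ?_, fun j => ?_⟩
    · rw [← Finset.sum_div, ← Finset.mul_sum, ← hmass, mul_div_cancel_right₀ _ hm]
    · rw [← Finset.sum_div, ← Finset.sum_mul, mul_div_right_comm, div_self hm, one_mul]

end Coupling

theorem transportCost_add (C P Q : Matrix ι κ ℝ) :
    transportCost C (P + Q) = transportCost C P + transportCost C Q := by
  simp [transportCost, add_mul, Finset.sum_add_distrib]

theorem transportCost_smul (C P : Matrix ι κ ℝ) (c : ℝ) :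
    transportCost C (c • P) = c * transportCost C P := by
  simp [transportCost, Finset.mul_sum, mul_assoc]

theorem transportCost_smul_left (C P : Matrix ι κ ℝ) (c : ℝ) :
    transportCost (c • C) P = c * transportCost C P := by
  simp [transportCost, Finset.mul_sum, mul_left_comm]

theorem transportCost_single [DecidableEq ι] [DecidableEq κ] (C : Matrix ι κ ℝ) (i : ι) (j : κ) :
    transportCost C (Matrix.single i j 1) = C i j := by
  simp [transportCost, Matrix.single_apply, ite_and]

theorem dualValue_smul (a : ι → ℝ) (b : κ → ℝ) (φ : ι → ℝ) (ψ : κ → ℝ) (c : ℝ) :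
    dualValue a b (c • φ) (c • ψ) = c * dualValue a b φ ψ := by
  simp [dualValue, mul_add, Finset.mul_sum, mul_left_comm]

section Duality

variable {a : ι → ℝ} {b : κ → ℝ} {C P : Matrix ι κ ℝ}

theorem IsCoupling.dualValue_eq (hP : IsCoupling a b P) (φ : ι → ℝ) (ψ : κ → ℝ) :
    dualValue a b φ ψ = ∑ i, ∑ j, P i j * (φ i + ψ j) := by
  simp only [dualValue, mul_add, Finset.sum_add_distrib, ← hP.2.1, ← hP.2.2, Finset.sum_mul]
  rw [Finset.sum_comm (f := fun j i => P i j * ψ j)]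

theorem dualValue_le_transportCost (hP : IsCoupling a b P) {φ : ι → ℝ} {ψ : κ → ℝ}
    (hβ : ∀ i j, φ i + ψ j ≤ C i j) : dualValue a b φ ψ ≤ transportCost C P := by
  rw [hP.dualValue_eq]
  exact Finset.sum_le_sum fun i _ => Finset.sum_le_sum fun j _ =>
    mul_le_mul_of_nonneg_left (hβ i j) (hP.1 i j)

end Duality

theorem isClosed_setOf_isCoupling_transportCost_le (C : Matrix ι κ ℝ) :
    IsClosed {p : Matrix ι κ ℝ × (ι → ℝ) × (κ → ℝ) × ℝ |
      IsCoupling p.2.1 p.2.2.1 p.1 ∧ transportCost C p.1 ≤ p.2.2.2} := by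
  simp only [IsCoupling, transportCost, Set.ofPred_and, Set.ofPred_forall]
  refine ((isClosed_iInter fun i => isClosed_iInter fun j => isClosed_le ?_ ?_).inter
    ((isClosed_iInter fun i => isClosed_eq ?_ ?_).inter
      (isClosed_iInter fun j => isClosed_eq ?_ ?_))).inter (isClosed_le ?_ ?_) <;> fun_prop

theorem isClosed_setOf_exists_isCoupling (C : Matrix ι κ ℝ) :
    IsClosed {q : (ι → ℝ) × (κ → ℝ) × ℝ |
      ∃ P, IsCoupling q.1 q.2.1 P ∧ transportCost C P ≤ q.2.2} := by
  refine IsSeqClosed.isClosed fun q q₀ hq hlim => ?_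
  choose P hP using hq
  obtain ⟨R, hR⟩ := isBounded_iff_forall_norm_le.1 (Metric.isBounded_range_of_tendsto q hlim)
  have hbound : ∀ n, (P n : ι → κ → ℝ) ∈ Set.Icc (0 : ι → κ → ℝ) fun _ _ => R := fun n =>
    ⟨(hP n).1.1, fun i j => calc
      P n i j ≤ (q n).1 i := (hP n).1.apply_le_left i j
      _ ≤ ‖q n‖ := (Real.le_norm_self _).trans ((norm_le_pi_norm _ i).trans (norm_fst_le _))
      _ ≤ R := hR _ (Set.mem_range_self n)⟩
  obtain ⟨P₀, -, φ, hφ, hPlim⟩ := (isCompact_Icc (α := ι → κ → ℝ)).tendsto_subseq hbound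
  exact ⟨P₀, (isClosed_setOf_isCoupling_transportCost_le C).isSeqClosed (fun n => hP (φ n))
    (hPlim.prodMk_nhds (hlim.comp hφ.tendsto_atTop))⟩

def transportCone (C : Matrix ι κ ℝ) : ProperCone ℝ ((ι → ℝ) × (κ → ℝ) × ℝ) where
  carrier := {q | ∃ P, IsCoupling q.1 q.2.1 P ∧ transportCost C P ≤ q.2.2}
  zero_mem' := ⟨0, .zero, by simp [transportCost]⟩
  add_mem' := fun ⟨P, hP, hPC⟩ ⟨Q, hQ, hQC⟩ =>
    ⟨P + Q, hP.add hQ, (transportCost_add C P Q).trans_le (add_le_add hPC hQC)⟩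
  smul_mem' c _ := fun ⟨P, hP, hPC⟩ =>
    ⟨(c : ℝ) • P, hP.smul c.2,
      (transportCost_smul C P c).trans_le (mul_le_mul_of_nonneg_left hPC c.2)⟩
  isClosed' := isClosed_setOf_exists_isCoupling C

theorem linearMap_apply_eq_sum {R : Type*} [CommSemiring R] [DecidableEq ι] [DecidableEq κ]
    (f : ((ι → R) × (κ → R) × R) →ₗ[R] R) (x : ι → R) (y : κ → R) (z : R) :
    f (x, y, z) = ∑ i, x i * f (Pi.single i 1, 0, 0) + ∑ j, y j * f (0, Pi.single j 1, 0)
      + z * f (0, 0, 1) := by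
  have hxyz : ((x, y, z) : (ι → R) × (κ → R) × R) = ∑ i, x i • (Pi.single i 1, 0, 0)
      + ∑ j, y j • (0, Pi.single j 1, 0) + z • (0, 0, 1) := by
    ext <;> simp [Prod.fst_sum, Prod.snd_sum, Finset.sum_apply, Pi.single_apply]
  rw [hxyz]
  simp only [map_add, map_sum, map_smul, smul_eq_mul]

theorem exists_dualValue_gt {a : ι → ℝ} {b : κ → ℝ} {C P₀ : Matrix ι κ ℝ} {t : ℝ}
    (hP₀ : IsCoupling a b P₀) (ht : ∀ P, IsCoupling a b P → t < transportCost C P) :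
    ∃ φ ψ, (∀ i j, φ i + ψ j ≤ C i j) ∧ t < dualValue a b φ ψ := by
  classical
  have hnot : (a, b, t) ∉ transportCone C := fun ⟨P, hP, hPC⟩ => (ht P hP).not_ge hPC
  obtain ⟨f, hf_nonneg, hf_neg⟩ := (transportCone C).hyperplane_separation_point hnot
  set φ : ι → ℝ := fun i => -f (Pi.single i 1, 0, 0)
  set ψ : κ → ℝ := fun j => -f (0, Pi.single j 1, 0)
  set γ := f (0, 0, 1)
  have hfeas : ∀ i j, φ i + ψ j ≤ γ * C i j := by
    intro i j
    have := hf_nonneg (Pi.single i 1, Pi.single j 1, C i j)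
      ⟨_, isCoupling_single i j, (transportCost_single C i j).le⟩
    rw [← ContinuousLinearMap.coe_coe, linearMap_apply_eq_sum] at this
    simp only [ContinuousLinearMap.coe_coe, Pi.single_apply, ite_mul, one_mul, zero_mul,
      Finset.sum_ite_eq', Finset.mem_univ, if_true] at this
    simp only [φ, ψ, γ]
    linarith
  have hval : γ * t < dualValue a b φ ψ := by
    rw [← ContinuousLinearMap.coe_coe, linearMap_apply_eq_sum] at hf_neg
    simp only [dualValue, φ, ψ, mul_neg, Finset.sum_neg_distrib, ContinuousLinearMap.coe_coe]
      at hf_neg ⊢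
    linarith
  -- for `γ = 0`, `(φ, ψ)` would be a dual ray of positive value, impossible as `P₀` is feasible
  have hγ : 0 < γ := by
    have h0 : 0 ≤ γ := hf_nonneg _ ⟨0, .zero, by simp [transportCost]⟩
    have := (dualValue_le_transportCost hP₀ hfeas).trans_eq (transportCost_smul_left C P₀ γ)
    refine h0.lt_of_ne fun h => ?_
    rw [← h] at hval this
    linarith
  refine ⟨γ⁻¹ • φ, γ⁻¹ • ψ, fun i j => ?_, ?_⟩
  · simpa [← mul_add, inv_mul_le_iff₀ hγ] using hfeas i j
  · rwa [dualValue_smul, lt_inv_mul_iff₀ hγ]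

theorem sInf_transportCost_eq_sSup_dualValue {a : ι → ℝ} {b : κ → ℝ} (C : Matrix ι κ ℝ)
    (ha : ∀ i, 0 ≤ a i) (hb : ∀ j, 0 ≤ b j) (hmass : ∑ i, a i = ∑ j, b j) :
    sInf {x | ∃ P, IsCoupling a b P ∧ x = transportCost C P}
      = sSup {y | ∃ β : (ι → ℝ) × (κ → ℝ),
          (∀ i j, β.1 i + β.2 j ≤ C i j) ∧ y = dualValue a b β.1 β.2} := by
  obtain ⟨P₀, hP₀⟩ := exists_isCoupling ha hb hmass
  have weak : ∀ y ∈ {y | ∃ β : (ι → ℝ) × (κ → ℝ),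
      (∀ i j, β.1 i + β.2 j ≤ C i j) ∧ y = dualValue a b β.1 β.2},
      ∀ x ∈ {x | ∃ P, IsCoupling a b P ∧ x = transportCost C P}, y ≤ x := by
    rintro _ ⟨β, hβ, rfl⟩ _ ⟨P, hP, rfl⟩
    exact dualValue_le_transportCost hP hβ
  set β₀ : (ι → ℝ) × (κ → ℝ) := (fun i => ⨅ j, C i j, 0)
  have hβ₀ : ∀ i j, β₀.1 i + β₀.2 j ≤ C i j := fun i j => by
    simpa [β₀] using ciInf_le (Finite.bddBelow_range (C i)) j
  symm
  refine csSup_eq_of_forall_le_of_forall_lt_exists_gt ⟨_, β₀, hβ₀, rfl⟩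
    (fun y hy => le_csInf ⟨_, P₀, hP₀, rfl⟩ (weak y hy)) fun t ht => ?_
  have hbdd : BddBelow {x | ∃ P, IsCoupling a b P ∧ x = transportCost C P} :=
    ⟨_, weak _ ⟨β₀, hβ₀, rfl⟩⟩
  obtain ⟨φ, ψ, hβ, hlt⟩ :=
    exists_dualValue_gt hP₀ fun P hP => ht.trans_le (csInf_le hbdd ⟨P, hP, rfl⟩)
  exact ⟨_, ⟨(φ, ψ), hβ, rfl⟩, hlt⟩

end OptimalTransport

/-- Linear programming duality for the optimal transport
linear program: the minimal transport cost equals the supremum of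
`⟨α, β⟩` over dual variables `β` satisfying `Lβ ≤ c`. -/
theorem stmt_4 (M : ℕ) (C : Matrix (Fin M) (Fin M) ℝ)
    (a b : Fin M → ℝ)
    (ha : ∀ i, 0 ≤ a i) (hb : ∀ i, 0 ≤ b i)
    (hmass : ∑ i, a i = ∑ i, b i) :
    sInf {x : ℝ | ∃ P : Matrix (Fin M) (Fin M) ℝ,
        (∀ i j, 0 ≤ P i j) ∧ (∀ i, ∑ j, P i j = a i) ∧ (∀ j, ∑ i, P i j = b j) ∧
        x = ∑ i, ∑ j, P i j * C i j}
      = sSup {y : ℝ | ∃ β : (Fin M → ℝ) × (Fin M → ℝ),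
        (∀ i j, β.1 i + β.2 j ≤ C i j) ∧
        y = (∑ i, a i * β.1 i) + (∑ j, b j * β.2 j)} := by
  simpa only [OptimalTransport.IsCoupling, OptimalTransport.transportCost,
    OptimalTransport.dualValue, and_assoc] using
    OptimalTransport.sInf_transportCost_eq_sSup_dualValue C ha hb hmass
end

section
/- The Legendre–Fenchel conjugate of the entropic regularized transport cost MK_λ(α) = min{⟨p, c + (1/λ)log p⟩ : p ∈ ℝ₊^{M²}, Lᵀp = α} + χ_Δ(α) is MK*_λ(β) = (1/λ)⟨q_λ(β), 1⟩ where q_λ(β) = exp(λ(Lβ − c) − 1) (componentwise exponential). -/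
open scoped BigOperators Classical

/-!
Pointwise, `p ↦ p u - λ⁻¹ p log p` is maximised at `p = exp (λ u - 1)` with maximum
`λ⁻¹ exp (λ u - 1)`; this is the Fenchel–Young inequality for the entropy, a rewriting of
`1 + t ≤ exp t`. For any coupling `P` of `α`, `⟨α, β⟩ = ⟨P, Lβ⟩`, so summing the pointwise bound
with `u = (Lβ - c)_{ij}` bounds `⟨α, β⟩ - cost P`, hence `⟨α, β⟩ - MK_λ(α)`, by
`λ⁻¹ ⟨q_λ(β), 1⟩`. The bound is attained at the marginals of `q_λ(β)` itself, coupled by `q_λ(β)`.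
-/

/-- The entropic regularized transport cost `MK_λ`, with value `⊤` outside
the set `Δ` of pairs of equal-mass nonnegative histograms
(the convention `0 · log 0 = 0` is automatic since `Real.log 0 = 0`). -/
noncomputable def MKlam (M : ℕ) (lam : ℝ) (C : Matrix (Fin M) (Fin M) ℝ)
    (α : (Fin M → ℝ) × (Fin M → ℝ)) : EReal :=
  if (∀ i, 0 ≤ α.1 i) ∧ (∀ j, 0 ≤ α.2 j) ∧ (∑ i, α.1 i) = (∑ j, α.2 j) then
    (((sInf {x : ℝ | ∃ P : Matrix (Fin M) (Fin M) ℝ,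
      (∀ i j, 0 ≤ P i j) ∧ (∀ i, ∑ j, P i j = α.1 i) ∧ (∀ j, ∑ i, P i j = α.2 j) ∧
      x = ∑ i, ∑ j, P i j * (C i j + (1 / lam) * Real.log (P i j))}) : ℝ) : EReal)
  else ⊤

open Real Finset

lemma mul_sub_mul_log_le_exp_sub_one (s : ℝ) {p : ℝ} (hp : 0 ≤ p) :
    p * s - p * log p ≤ exp (s - 1) := by
  rcases hp.eq_or_lt with rfl | hp
  · simp [(exp_pos _).le]
  · calc p * s - p * log p ≤ p * exp (s - 1 - log p) := by
          nlinarith [add_one_le_exp (s - 1 - log p)]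
      _ = exp (s - 1) := by rw [exp_sub, exp_log hp]; field_simp

lemma mul_sub_entropy_le {lam : ℝ} (hlam : 0 < lam) (u : ℝ) {p : ℝ} (hp : 0 ≤ p) :
    p * u - 1 / lam * (p * log p) ≤ 1 / lam * exp (lam * u - 1) :=
  calc p * u - 1 / lam * (p * log p) = 1 / lam * (p * (lam * u) - p * log p) := by
        field_simp
    _ ≤ 1 / lam * exp (lam * u - 1) := by
        gcongr; exact mul_sub_mul_log_le_exp_sub_one _ hp

lemma exp_mul_sub_entropy_eq {lam : ℝ} (hlam : 0 < lam) (u : ℝ) :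
    exp (lam * u - 1) * u - 1 / lam * (exp (lam * u - 1) * log (exp (lam * u - 1)))
      = 1 / lam * exp (lam * u - 1) := by
  rw [log_exp]; field_simp; ring

section Coupling

variable {ι κ : Type*} [Fintype ι] [Fintype κ]

def IsCoupling (a : ι → ℝ) (b : κ → ℝ) (P : Matrix ι κ ℝ) : Prop :=
  (∀ i j, 0 ≤ P i j) ∧ (∀ i, ∑ j, P i j = a i) ∧ (∀ j, ∑ i, P i j = b j)

noncomputable def entropicCost (lam : ℝ) (C P : Matrix ι κ ℝ) : ℝ :=
  ∑ i, ∑ j, P i j * (C i j + 1 / lam * log (P i j))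

/-- The matrix `q_λ(β) = exp (λ (Lβ - c) - 1)`. -/
noncomputable def gibbsKernel (lam : ℝ) (C : Matrix ι κ ℝ) (f : ι → ℝ) (g : κ → ℝ) :
    Matrix ι κ ℝ :=
  fun i j => exp (lam * (f i + g j - C i j) - 1)

lemma IsCoupling.sum_mul_add_sum_mul {a : ι → ℝ} {b : κ → ℝ} {P : Matrix ι κ ℝ}
    (hP : IsCoupling a b P) (f : ι → ℝ) (g : κ → ℝ) :
    ∑ i, a i * f i + ∑ j, b j * g j = ∑ i, ∑ j, P i j * (f i + g j) := by
  obtain ⟨-, hrow, hcol⟩ := hP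
  simp only [mul_add, sum_add_distrib, ← hrow, ← hcol, sum_mul]
  rw [sum_comm (f := fun j i => P i j * g j)]

lemma IsCoupling.marginals_nonneg_sum_eq {a : ι → ℝ} {b : κ → ℝ} {P : Matrix ι κ ℝ}
    (hP : IsCoupling a b P) : (∀ i, 0 ≤ a i) ∧ (∀ j, 0 ≤ b j) ∧ ∑ i, a i = ∑ j, b j := by
  obtain ⟨hnonneg, hrow, hcol⟩ := hP
  refine ⟨fun i => ?_, fun j => ?_, ?_⟩
  · exact hrow i ▸ sum_nonneg fun j _ => hnonneg i j
  · exact hcol j ▸ sum_nonneg fun i _ => hnonneg i j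
  · simp only [← hrow, ← hcol]; exact sum_comm

lemma exists_isCoupling {a : ι → ℝ} {b : κ → ℝ} (ha : ∀ i, 0 ≤ a i) (hb : ∀ j, 0 ≤ b j)
    (hab : ∑ i, a i = ∑ j, b j) : ∃ P, IsCoupling a b P := by
  by_cases hs : ∑ i, a i = 0
  · have ha0 := (sum_eq_zero_iff_of_nonneg fun i _ => ha i).mp hs
    have hb0 := (sum_eq_zero_iff_of_nonneg fun j _ => hb j).mp (hab ▸ hs)
    refine ⟨0, fun _ _ => le_rfl, fun i => ?_, fun j => ?_⟩
    · simp [ha0 i (mem_univ i)]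
    · simp [hb0 j (mem_univ j)]
  · refine ⟨fun i j => a i * b j / ∑ k, a k, fun i j =>
      div_nonneg (mul_nonneg (ha i) (hb j)) (sum_nonneg fun k _ => ha k), fun i => ?_, fun j => ?_⟩
    · rw [← sum_div, ← mul_sum, ← hab, mul_div_cancel_right₀ _ hs]
    · rw [← sum_div, ← sum_mul, mul_div_cancel_left₀ _ hs]

lemma gibbsKernel_isCoupling (lam : ℝ) (C : Matrix ι κ ℝ) (f : ι → ℝ) (g : κ → ℝ) :
    IsCoupling (fun i => ∑ j, gibbsKernel lam C f g i j)
      (fun j => ∑ i, gibbsKernel lam C f g i j) (gibbsKernel lam C f g) :=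
  ⟨fun _ _ => (exp_pos _).le, fun _ => rfl, fun _ => rfl⟩

lemma IsCoupling.sum_mul_sub_entropicCost {a : ι → ℝ} {b : κ → ℝ} {P : Matrix ι κ ℝ}
    (hP : IsCoupling a b P) (lam : ℝ) (C : Matrix ι κ ℝ) (f : ι → ℝ) (g : κ → ℝ) :
    ∑ i, a i * f i + ∑ j, b j * g j - entropicCost lam C P
      = ∑ i, ∑ j, (P i j * (f i + g j - C i j) - 1 / lam * (P i j * log (P i j))) := by
  rw [hP.sum_mul_add_sum_mul, entropicCost, ← sum_sub_distrib]
  refine sum_congr rfl fun i _ => ?_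
  rw [← sum_sub_distrib]
  exact sum_congr rfl fun j _ => by ring

lemma IsCoupling.sum_mul_sub_entropicCost_le {a : ι → ℝ} {b : κ → ℝ} {P : Matrix ι κ ℝ}
    (hP : IsCoupling a b P) {lam : ℝ} (hlam : 0 < lam) (C : Matrix ι κ ℝ)
    (f : ι → ℝ) (g : κ → ℝ) :
    ∑ i, a i * f i + ∑ j, b j * g j - entropicCost lam C P
      ≤ 1 / lam * ∑ i, ∑ j, gibbsKernel lam C f g i j := by
  rw [hP.sum_mul_sub_entropicCost, mul_sum]
  refine sum_le_sum fun i _ => ?_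
  rw [mul_sum]
  exact sum_le_sum fun j _ => mul_sub_entropy_le hlam _ (hP.1 i j)

lemma gibbsKernel_sum_mul_sub_entropicCost {lam : ℝ} (hlam : 0 < lam) (C : Matrix ι κ ℝ)
    (f : ι → ℝ) (g : κ → ℝ) :
    ∑ i, (∑ j, gibbsKernel lam C f g i j) * f i + ∑ j, (∑ i, gibbsKernel lam C f g i j) * g j
        - entropicCost lam C (gibbsKernel lam C f g)
      = 1 / lam * ∑ i, ∑ j, gibbsKernel lam C f g i j := by
  rw [(gibbsKernel_isCoupling lam C f g).sum_mul_sub_entropicCost, mul_sum]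
  refine sum_congr rfl fun i _ => ?_
  rw [mul_sum]
  exact sum_congr rfl fun j _ => exp_mul_sub_entropy_eq hlam _

end Coupling

lemma MKlam_of_mem {M : ℕ} (lam : ℝ) (C : Matrix (Fin M) (Fin M) ℝ)
    {α : (Fin M → ℝ) × (Fin M → ℝ)}
    (hα : (∀ i, 0 ≤ α.1 i) ∧ (∀ j, 0 ≤ α.2 j) ∧ (∑ i, α.1 i) = (∑ j, α.2 j)) :
    MKlam M lam C α = ↑(sInf (entropicCost lam C '' {P | IsCoupling α.1 α.2 P})) := by
  rw [MKlam, if_pos hα]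
  congr 2
  ext x
  simp [IsCoupling, entropicCost, and_assoc, eq_comm]

/-- the Legendre–Fenchel conjugate of `MK_λ` is
`MK*_λ(β) = (1/λ) ⟨q_λ(β), 1⟩` with `q_λ(β) = exp(λ(Lβ − c) − 1)`. -/
theorem stmt_9 (M : ℕ) (lam : ℝ) (hlam : 0 < lam)
    (C : Matrix (Fin M) (Fin M) ℝ)
    (β : (Fin M → ℝ) × (Fin M → ℝ)) :
    (⨆ α : (Fin M → ℝ) × (Fin M → ℝ),
        (((∑ i, α.1 i * β.1 i) + (∑ j, α.2 j * β.2 j) : ℝ) : EReal) - MKlam M lam C α)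
      = (((1 / lam) * ∑ i, ∑ j,
          Real.exp (lam * (β.1 i + β.2 j - C i j) - 1) : ℝ) : EReal) := by
  have bound : ∀ α : (Fin M → ℝ) × (Fin M → ℝ),
      ∀ x ∈ entropicCost lam C '' {P | IsCoupling α.1 α.2 P},
      ∑ i, α.1 i * β.1 i + ∑ j, α.2 j * β.2 j
        - 1 / lam * ∑ i, ∑ j, gibbsKernel lam C β.1 β.2 i j ≤ x := by
    rintro α _ ⟨P, hP, rfl⟩
    linarith [hP.sum_mul_sub_entropicCost_le hlam C β.1 β.2]
  change _ = ((1 / lam * ∑ i, ∑ j, gibbsKernel lam C β.1 β.2 i j : ℝ) : EReal)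
  apply le_antisymm
  · refine iSup_le fun α => ?_
    by_cases hα : (∀ i, 0 ≤ α.1 i) ∧ (∀ j, 0 ≤ α.2 j) ∧ (∑ i, α.1 i) = (∑ j, α.2 j)
    · obtain ⟨P, hP⟩ := exists_isCoupling hα.1 hα.2.1 hα.2.2
      rw [MKlam_of_mem lam C hα, ← EReal.coe_sub, EReal.coe_le_coe_iff]
      linarith [le_csInf (Set.Nonempty.image _ ⟨P, hP⟩) (bound α)]
    · rw [MKlam, if_neg hα, EReal.sub_top]
      exact bot_le
  · set q := gibbsKernel lam C β.1 β.2
    set αq : (Fin M → ℝ) × (Fin M → ℝ) := (fun i => ∑ j, q i j, fun j => ∑ i, q i j)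
    have hq : IsCoupling αq.1 αq.2 q := gibbsKernel_isCoupling lam C β.1 β.2
    refine le_iSup_of_le αq ?_
    rw [MKlam_of_mem lam C hq.marginals_nonneg_sum_eq, ← EReal.coe_sub, EReal.coe_le_coe_iff]
    linarith [csInf_le ⟨_, bound αq⟩ (Set.mem_image_of_mem (entropicCost lam C) hq),
      gibbsKernel_sum_mul_sub_entropicCost hlam C β.1 β.2]
end

section
/- Let MK_{λ,≤N}(α) = min{⟨p, c + (1/λ)log p − (log N / λ)1⟩ : p ≥ 0, Lᵀp = α} + χ_{Δ_{≤N}}(α), where Δ_{≤N} is the set of equal-mass nonnegative histogram pairs with mass at most N. Then its convex conjugate is MK*_{λ,≤N}(β) = (N/λ)⟨q_λ(β), 1⟩ if ⟨q_λ(β), 1⟩ ≤ 1, and (N/λ)log⟨q_λ(β), 1⟩ + N/λ if ⟨q_λ(β), 1⟩ ≥ 1, with q_λ(β) = exp(λ(Lβ − c) − 1). -/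
open scoped BigOperators Classical

/-!
Write `b = Lβ - c`. For `α ∈ Δ_{≤N}` and a coupling `P` of `α`, the pairing `⟨α, β⟩` minus the
cost of `P` is the entropic gain `∑ P (b - (log P - log N) / λ)`, so the conjugate is the
maximum of this gain over `P ≥ 0` of mass at most `N`. Fenchel–Young for the entropy,
`x t - x log x ≤ exp (t - 1)`, shifted by the multiplier `log r / λ` with
`r = max 1 ⟨q_λ(β), 1⟩`, bounds the gain by the claimed value, and `P = (N / r) q_λ(β)`
attains it.
-/

/-- The normalized entropic transport cost `MK_{λ,≤N}`, with value `⊤` outside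
the set `Δ_{≤N}` of equal-mass nonnegative histogram pairs of mass at most `N`. -/
noncomputable def MKlamLeN (M : ℕ) (lam Nr : ℝ) (C : Matrix (Fin M) (Fin M) ℝ)
    (α : (Fin M → ℝ) × (Fin M → ℝ)) : EReal :=
  if (∀ i, 0 ≤ α.1 i) ∧ (∀ j, 0 ≤ α.2 j) ∧ (∑ i, α.1 i) = (∑ j, α.2 j) ∧
      (∑ i, α.1 i) ≤ Nr then
    (((sInf {x : ℝ | ∃ P : Matrix (Fin M) (Fin M) ℝ,
      (∀ i j, 0 ≤ P i j) ∧ (∀ i, ∑ j, P i j = α.1 i) ∧ (∀ j, ∑ i, P i j = α.2 j) ∧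
      x = ∑ i, ∑ j, P i j *
        (C i j + (1 / lam) * Real.log (P i j) - Real.log Nr / lam)}) : ℝ) : EReal)
  else ⊤

open Real

theorem mul_sub_mul_log_le_exp_sub_one_s10 {x : ℝ} (hx : 0 ≤ x) (t : ℝ) :
    x * t - x * log x ≤ exp (t - 1) := by
  rcases hx.eq_or_lt with rfl | hx
  · simp only [zero_mul, sub_zero]; positivity
  · have h := add_one_le_exp (t - 1 - log x)
    rw [exp_sub, exp_log hx] at h
    have : exp (t - 1) / x * x = exp (t - 1) := div_mul_cancel₀ _ hx.ne'
    nlinarith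

section EntropicMax

variable {ι : Type*} [Fintype ι] {lam Nr : ℝ}

noncomputable def entropicGain (lam Nr : ℝ) (b P : ι → ℝ) : ℝ :=
  ∑ k, P k * (b k - (log (P k) - log Nr) / lam)

noncomputable def entropicMax (lam Nr S : ℝ) : ℝ :=
  if S ≤ 1 then Nr / lam * S else Nr / lam * log S + Nr / lam

theorem entropicMax_eq (lam Nr : ℝ) {S : ℝ} :
    entropicMax lam Nr S = Nr / lam * (S / max 1 S + log (max 1 S)) := by
  unfold entropicMax
  split_ifs with h
  · simp [max_eq_left h]
  · have h1 : 1 < S := not_le.mp h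
    rw [max_eq_right h1.le, div_self (by positivity)]
    ring

/-- `log r / lam` acts as a Lagrange multiplier for the mass constraint `∑ P ≤ Nr`. -/
theorem entropic_entry_le (hlam : 0 < lam) (hN : 0 < Nr) {r : ℝ} (hr : 0 < r) (b : ℝ)
    {x : ℝ} (hx : 0 ≤ x) :
    x * (b - (log x - log Nr) / lam) ≤ Nr / lam * (exp (lam * b - 1) / r) + log r / lam * x := by
  rcases hx.eq_or_lt with rfl | hx
  · simp only [zero_mul, mul_zero, add_zero]; positivity
  · have key := mul_sub_mul_log_le_exp_sub_one_s10 (x := x * r / Nr) (by positivity) (lam * b)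
    rw [log_div (by positivity) hN.ne', log_mul hx.ne' hr.ne'] at key
    have key' := mul_le_mul_of_nonneg_left key (by positivity : 0 ≤ Nr / (lam * r))
    have e : Nr / (lam * r) * (x * r / Nr * (lam * b) - x * r / Nr * (log x + log r - log Nr))
        = x * (b - (log x - log Nr) / lam) - log r / lam * x := by
      field_simp
      ring
    have e' : Nr / (lam * r) * exp (lam * b - 1) = Nr / lam * (exp (lam * b - 1) / r) := by
      ring
    rw [e, e'] at key'
    linarith

theorem entropicGain_le (hlam : 0 < lam) (hN : 0 < Nr) (b : ι → ℝ) {P : ι → ℝ}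
    (hP : ∀ k, 0 ≤ P k) (hmass : ∑ k, P k ≤ Nr) :
    entropicGain lam Nr b P ≤ entropicMax lam Nr (∑ k, exp (lam * b k - 1)) := by
  set S := ∑ k, exp (lam * b k - 1)
  have hr : 0 < max 1 S := lt_max_of_lt_left one_pos
  have hlog : 0 ≤ log (max 1 S) / lam := div_nonneg (log_nonneg (le_max_left _ _)) hlam.le
  calc entropicGain lam Nr b P
      ≤ ∑ k, (Nr / lam * (exp (lam * b k - 1) / max 1 S) + log (max 1 S) / lam * P k) :=
        Finset.sum_le_sum fun k _ => entropic_entry_le hlam hN hr (b k) (hP k)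
    _ = Nr / lam * (S / max 1 S) + log (max 1 S) / lam * ∑ k, P k := by
        rw [Finset.sum_add_distrib, ← Finset.mul_sum, ← Finset.mul_sum, ← Finset.sum_div]
    _ ≤ Nr / lam * (S / max 1 S) + log (max 1 S) / lam * Nr := by gcongr
    _ = entropicMax lam Nr S := by rw [entropicMax_eq]; ring

noncomputable def entropicMaximizer (lam Nr : ℝ) (b : ι → ℝ) (k : ι) : ℝ :=
  Nr / max 1 (∑ k, exp (lam * b k - 1)) * exp (lam * b k - 1)

theorem entropicMaximizer_nonneg (hN : 0 < Nr) (b : ι → ℝ) (k : ι) :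
    0 ≤ entropicMaximizer lam Nr b k := by
  unfold entropicMaximizer; positivity

theorem sum_entropicMaximizer (b : ι → ℝ) :
    ∑ k, entropicMaximizer lam Nr b k =
      Nr * ((∑ k, exp (lam * b k - 1)) / max 1 (∑ k, exp (lam * b k - 1))) := by
  simp only [entropicMaximizer, ← Finset.mul_sum]
  ring

theorem sum_entropicMaximizer_le (hN : 0 < Nr) (b : ι → ℝ) :
    ∑ k, entropicMaximizer lam Nr b k ≤ Nr := by
  rw [sum_entropicMaximizer]
  exact mul_le_of_le_one_right hN.le (div_le_one_of_le₀ (le_max_right _ _) (by positivity))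

theorem entropicGain_entropicMaximizer (hlam : 0 < lam) (hN : 0 < Nr) (b : ι → ℝ) :
    entropicGain lam Nr b (entropicMaximizer lam Nr b) =
      entropicMax lam Nr (∑ k, exp (lam * b k - 1)) := by
  generalize hS : ∑ k, exp (lam * b k - 1) = S
  have hr : 0 < max 1 S := lt_max_of_lt_left one_pos
  have hentry : ∀ k, b k - (log (entropicMaximizer lam Nr b k) - log Nr) / lam
      = (1 + log (max 1 S)) / lam := fun k => by
    rw [entropicMaximizer, hS, log_mul (by positivity) (exp_ne_zero _), log_div hN.ne' hr.ne',
      log_exp]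
    field_simp
    ring
  -- complementary slackness: either the multiplier `log (max 1 S)` vanishes or the mass is `Nr`
  have hslack : S / max 1 S * log (max 1 S) = log (max 1 S) := by
    rcases le_total S 1 with h | h
    · simp [max_eq_left h]
    · rw [max_eq_right h, div_self (by positivity), one_mul]
  simp only [entropicGain, hentry, ← Finset.sum_mul]
  rw [sum_entropicMaximizer, hS, entropicMax_eq]
  linear_combination Nr / lam * hslack

end EntropicMax

section Couplings

variable {ι κ : Type*} [Fintype ι] [Fintype κ]

def couplings (a : ι → ℝ) (b : κ → ℝ) : Set (Matrix ι κ ℝ) :=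
  {P | (∀ i j, 0 ≤ P i j) ∧ (∀ i, ∑ j, P i j = a i) ∧ (∀ j, ∑ i, P i j = b j)}

theorem couplings_nonempty {a : ι → ℝ} {b : κ → ℝ} (ha : ∀ i, 0 ≤ a i) (hb : ∀ j, 0 ≤ b j)
    (hab : ∑ i, a i = ∑ j, b j) : (couplings a b).Nonempty := by
  set m := ∑ i, a i
  -- the independent coupling `a bᵀ / m`; for `m = 0` it is `0` by the `x / 0 = 0` convention
  refine ⟨fun i j => a i * b j / m, fun i j => ?_, fun i => ?_, fun j => ?_⟩
  · exact div_nonneg (mul_nonneg (ha i) (hb j)) (Finset.sum_nonneg fun k _ => ha k)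
  · simp only [← Finset.sum_div, ← Finset.mul_sum, ← hab]
    rcases eq_or_ne m 0 with hm | hm
    · simp [(Finset.sum_eq_zero_iff_of_nonneg fun i _ => ha i).mp hm i (Finset.mem_univ i)]
    · exact mul_div_cancel_right₀ _ hm
  · simp only [← Finset.sum_div, ← Finset.sum_mul]
    rcases eq_or_ne m 0 with hm | hm
    · simp [(Finset.sum_eq_zero_iff_of_nonneg fun j _ => hb j).mp (hab ▸ hm) j (Finset.mem_univ j)]
    · exact mul_div_cancel_left₀ _ hm

theorem sum_sum_eq_of_mem_couplings {a : ι → ℝ} {b : κ → ℝ} {P : Matrix ι κ ℝ}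
    (hP : P ∈ couplings a b) : ∑ i, ∑ j, P i j = ∑ i, a i :=
  Finset.sum_congr rfl fun i _ => hP.2.1 i

def marginals (P : Matrix ι κ ℝ) : (ι → ℝ) × (κ → ℝ) :=
  (fun i => ∑ j, P i j, fun j => ∑ i, P i j)

theorem mem_couplings_marginals {P : Matrix ι κ ℝ} (hP : ∀ i j, 0 ≤ P i j) :
    P ∈ couplings (marginals P).1 (marginals P).2 :=
  ⟨hP, fun _ => rfl, fun _ => rfl⟩

/-- `Lβ - c` in the paper's notation, for the potentials `β = (f, g)`. -/
def liftSubCost (C : Matrix ι κ ℝ) (f : ι → ℝ) (g : κ → ℝ) (p : ι × κ) : ℝ :=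
  f p.1 + g p.2 - C p.1 p.2

noncomputable def transportCost (lam Nr : ℝ) (C P : Matrix ι κ ℝ) : ℝ :=
  ∑ i, ∑ j, P i j * (C i j + (1 / lam) * log (P i j) - log Nr / lam)

theorem pairing_sub_transportCost {a : ι → ℝ} {b : κ → ℝ} {P : Matrix ι κ ℝ}
    (hP : P ∈ couplings a b) (lam Nr : ℝ) (C : Matrix ι κ ℝ) (f : ι → ℝ) (g : κ → ℝ) :
    (∑ i, a i * f i + ∑ j, b j * g j) - transportCost lam Nr C P =
      entropicGain lam Nr (liftSubCost C f g) (fun p => P p.1 p.2) := by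
  obtain ⟨-, hrow, hcol⟩ := hP
  simp only [entropicGain, transportCost, liftSubCost, Fintype.sum_prod_type, ← hrow, ← hcol,
    Finset.sum_mul]
  rw [Finset.sum_comm (f := fun j i => P i j * g j), ← Finset.sum_add_distrib,
    ← Finset.sum_sub_distrib]
  refine Finset.sum_congr rfl fun i _ => ?_
  rw [← Finset.sum_add_distrib, ← Finset.sum_sub_distrib]
  exact Finset.sum_congr rfl fun j _ => by ring

end Couplings

section Conjugate

variable {M : ℕ} {lam Nr : ℝ}

def histPairsLe (M : ℕ) (Nr : ℝ) : Set ((Fin M → ℝ) × (Fin M → ℝ)) :=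
  {α | (∀ i, 0 ≤ α.1 i) ∧ (∀ j, 0 ≤ α.2 j) ∧ (∑ i, α.1 i) = (∑ j, α.2 j) ∧ (∑ i, α.1 i) ≤ Nr}

theorem MKlamLeN_of_not_mem {α : (Fin M → ℝ) × (Fin M → ℝ)} (h : α ∉ histPairsLe M Nr)
    (lam : ℝ) (C : Matrix (Fin M) (Fin M) ℝ) : MKlamLeN M lam Nr C α = ⊤ :=
  if_neg h

theorem MKlamLeN_of_mem {α : (Fin M → ℝ) × (Fin M → ℝ)} (h : α ∈ histPairsLe M Nr)
    (lam : ℝ) (C : Matrix (Fin M) (Fin M) ℝ) :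
    MKlamLeN M lam Nr C α = ((sInf (transportCost lam Nr C '' couplings α.1 α.2) : ℝ) : EReal) := by
  rw [MKlamLeN, if_pos (by exact h)]
  congr 3
  ext x
  simp [couplings, transportCost, and_assoc, eq_comm]

theorem mem_histPairsLe_of_mem_couplings {α : (Fin M → ℝ) × (Fin M → ℝ)}
    {P : Matrix (Fin M) (Fin M) ℝ} (hP : P ∈ couplings α.1 α.2) (hmass : ∑ i, ∑ j, P i j ≤ Nr) :
    α ∈ histPairsLe M Nr := by
  obtain ⟨hP0, hrow, hcol⟩ := hP
  refine ⟨fun i => hrow i ▸ Finset.sum_nonneg fun j _ => hP0 i j,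
    fun j => hcol j ▸ Finset.sum_nonneg fun i _ => hP0 i j, ?_, ?_⟩
  · simp only [← hrow, ← hcol]
    exact Finset.sum_comm
  · simpa only [hrow] using hmass

theorem pairing_sub_le_transportCost (hlam : 0 < lam) (hN : 0 < Nr)
    (C : Matrix (Fin M) (Fin M) ℝ) (β : (Fin M → ℝ) × (Fin M → ℝ))
    {α : (Fin M → ℝ) × (Fin M → ℝ)} (hα : α ∈ histPairsLe M Nr)
    {P : Matrix (Fin M) (Fin M) ℝ} (hP : P ∈ couplings α.1 α.2) :
    (∑ i, α.1 i * β.1 i + ∑ j, α.2 j * β.2 j) -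
        entropicMax lam Nr (∑ p, exp (lam * liftSubCost C β.1 β.2 p - 1)) ≤
      transportCost lam Nr C P := by
  have hmass : ∑ p : Fin M × Fin M, P p.1 p.2 ≤ Nr := by
    rw [Fintype.sum_prod_type' (fun i j => P i j), sum_sum_eq_of_mem_couplings hP]
    exact hα.2.2.2
  have hgain := entropicGain_le hlam hN (liftSubCost C β.1 β.2) (fun p => hP.1 p.1 p.2) hmass
  rw [← pairing_sub_transportCost hP] at hgain
  linarith

theorem pairing_sub_MKlamLeN_le (hlam : 0 < lam) (hN : 0 < Nr)
    (C : Matrix (Fin M) (Fin M) ℝ) (β α : (Fin M → ℝ) × (Fin M → ℝ)) :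
    (((∑ i, α.1 i * β.1 i + ∑ j, α.2 j * β.2 j : ℝ)) : EReal) - MKlamLeN M lam Nr C α ≤
      ((entropicMax lam Nr (∑ p, exp (lam * liftSubCost C β.1 β.2 p - 1)) : ℝ) : EReal) := by
  by_cases hα : α ∈ histPairsLe M Nr
  · rw [MKlamLeN_of_mem hα, ← EReal.coe_sub, EReal.coe_le_coe_iff, sub_le_comm]
    exact le_csInf ((couplings_nonempty hα.1 hα.2.1 hα.2.2.1).image _)
      (Set.forall_mem_image.2 fun P hP => pairing_sub_le_transportCost hlam hN C β hα hP)
  · rw [MKlamLeN_of_not_mem hα, EReal.sub_top]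
    exact bot_le

theorem pairing_sub_MKlamLeN_marginals_entropicMaximizer (hlam : 0 < lam) (hN : 0 < Nr)
    (C : Matrix (Fin M) (Fin M) ℝ) (β : (Fin M → ℝ) × (Fin M → ℝ)) :
    let α := marginals fun i j => entropicMaximizer lam Nr (liftSubCost C β.1 β.2) (i, j)
    (((∑ i, α.1 i * β.1 i + ∑ j, α.2 j * β.2 j : ℝ)) : EReal) - MKlamLeN M lam Nr C α =
      ((entropicMax lam Nr (∑ p, exp (lam * liftSubCost C β.1 β.2 p - 1)) : ℝ) : EReal) := by
  intro α
  set P : Matrix (Fin M) (Fin M) ℝ :=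
    fun i j => entropicMaximizer lam Nr (liftSubCost C β.1 β.2) (i, j)
  have hP : P ∈ couplings α.1 α.2 :=
    mem_couplings_marginals fun i j => entropicMaximizer_nonneg hN _ _
  have hα : α ∈ histPairsLe M Nr := by
    refine mem_histPairsLe_of_mem_couplings hP ?_
    rw [← Fintype.sum_prod_type']
    exact sum_entropicMaximizer_le hN _
  have hcost : IsLeast (transportCost lam Nr C '' couplings α.1 α.2)
      ((∑ i, α.1 i * β.1 i + ∑ j, α.2 j * β.2 j) -
        entropicMax lam Nr (∑ p, exp (lam * liftSubCost C β.1 β.2 p - 1))) := by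
    refine ⟨⟨P, hP, ?_⟩, Set.forall_mem_image.2 fun Q hQ =>
      pairing_sub_le_transportCost hlam hN C β hα hQ⟩
    have := pairing_sub_transportCost hP lam Nr C β.1 β.2
    rw [entropicGain_entropicMaximizer hlam hN] at this
    linarith
  rw [MKlamLeN_of_mem hα, hcost.csInf_eq, ← EReal.coe_sub, sub_sub_cancel]

end Conjugate

/-- the convex conjugate of `MK_{λ,≤N}` equals
`(N/λ)⟨q_λ(β),1⟩` when `⟨q_λ(β),1⟩ ≤ 1`, and
`(N/λ)log⟨q_λ(β),1⟩ + N/λ` when `⟨q_λ(β),1⟩ ≥ 1`,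
where `q_λ(β) = exp(λ(Lβ − c) − 1)`. -/
theorem stmt_10 (M : ℕ) (lam Nr : ℝ) (hlam : 0 < lam) (hN : 0 < Nr)
    (C : Matrix (Fin M) (Fin M) ℝ)
    (β : (Fin M → ℝ) × (Fin M → ℝ)) :
    letI S : ℝ := ∑ i, ∑ j, Real.exp (lam * (β.1 i + β.2 j - C i j) - 1)
    (⨆ α : (Fin M → ℝ) × (Fin M → ℝ),
        (((∑ i, α.1 i * β.1 i) + (∑ j, α.2 j * β.2 j) : ℝ) : EReal)
          - MKlamLeN M lam Nr C α)
      = if S ≤ 1 then (((Nr / lam) * S : ℝ) : EReal)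
        else (((Nr / lam) * Real.log S + Nr / lam : ℝ) : EReal) := by
  have hS : ∑ i, ∑ j, exp (lam * (β.1 i + β.2 j - C i j) - 1) =
      ∑ p, exp (lam * liftSubCost C β.1 β.2 p - 1) :=
    (Fintype.sum_prod_type' _).symm
  have hconj := le_antisymm (iSup_le (pairing_sub_MKlamLeN_le hlam hN C β))
    ((pairing_sub_MKlamLeN_marginals_entropicMaximizer hlam hN C β).symm.le.trans
      (le_iSup_of_le _ le_rfl))
  rw [hS]
  unfold entropicMax at hconj
  split_ifs at hconj ⊢ <;> exact hconj
end

section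
/- The gradient of MK*_{λ,≤N} is Lipschitz continuous on ℝ^{2M} with Lipschitz constant at most 2λN. -/
/-!
Write `q = q_λ(β)` and `S = ⟨q, 1⟩`. Then `MK* = (N/λ) φ(S)` with `φ x = x` for `x ≤ 1`
and `φ x = log x + 1` beyond; `φ` is `C¹` with `φ' x = 1 / max x 1`, so the gradient is `N`
times the two marginals of `q` divided by `max S 1`.

For the Lipschitz bound, put `g = ∇MK*`, `u = g β - g β'`, `d = β - β'` and bound the right
derivative of `t ↦ ⟪g (β' + t d), u⟫`, whose increment over `[0, 1]` is `‖u‖²`. Only right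
derivatives exist, because `max S 1` has a corner where `S` crosses `1`. Where `S ≤ 1` the
derivative is `λN ∑ q (Ld)(Lu)`, and `|(Ld)_p (Lu)_p| ≤ 2‖d‖‖u‖`. Where `S ≥ 1` it is `λN`
times the covariance of `Ld` and `Lu` under the probability weights `q / S`. By
Cauchy–Schwarz, this covariance is at most `√(E (Ld)²) √(E (Lu)²) ≤ 2‖d‖‖u‖`.
-/

open scoped BigOperators Classical

/-- The dual Sinkhorn cost `MK*_{λ,≤N}` as a function of
`β ∈ ℝ^{2M} ≃ EuclideanSpace ℝ (Fin M ⊕ Fin M)`. -/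
noncomputable def MKstarLeN (M : ℕ) (lam Nr : ℝ) (C : Matrix (Fin M) (Fin M) ℝ)
    (β : EuclideanSpace ℝ (Fin M ⊕ Fin M)) : ℝ :=
  letI S : ℝ := ∑ i, ∑ j,
    Real.exp (lam * (β (Sum.inl i) + β (Sum.inr j) - C i j) - 1)
  if S ≤ 1 then (Nr / lam) * S else (Nr / lam) * Real.log S + Nr / lam

/-- Its gradient. -/
noncomputable def MKstarGrad (M : ℕ) (lam Nr : ℝ) (C : Matrix (Fin M) (Fin M) ℝ)
    (β : EuclideanSpace ℝ (Fin M ⊕ Fin M)) : EuclideanSpace ℝ (Fin M ⊕ Fin M) :=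
  letI q : Fin M → Fin M → ℝ := fun i j =>
    Real.exp (lam * (β (Sum.inl i) + β (Sum.inr j) - C i j) - 1)
  letI S : ℝ := ∑ i, ∑ j, q i j
  WithLp.toLp 2 fun idx =>
    match idx with
    | Sum.inl i => if S ≤ 1 then Nr * ∑ j, q i j else Nr * (∑ j, q i j) / S
    | Sum.inr j => if S ≤ 1 then Nr * ∑ i, q i j else Nr * (∑ i, q i j) / S

open Real Filter Set Topology Finset Asymptotics
open scoped RealInnerProductSpace

lemma ite_le_one_div_eq_div_max (S x : ℝ) : (if S ≤ 1 then x else x / S) = x / max S 1 := by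
  split_ifs with h
  · rw [max_eq_right h, div_one]
  · rw [max_eq_left (not_le.1 h).le]

lemma HasDerivAt.hasDerivWithinAt_Ici_max_const_of_eq {f : ℝ → ℝ} {f' t c : ℝ}
    (hf : HasDerivAt f f' t) (hft : f t = c) :
    HasDerivWithinAt (fun s => max (f s) c) (max f' 0) (Ici t) t := by
  rw [hasDerivWithinAt_iff_isLittleO]
  refine IsBigO.trans_isLittleO (IsBigO.of_bound' ?_)
    ((hasDerivAt_iff_isLittleO.1 hf).mono nhdsWithin_le_nhds)
  filter_upwards [self_mem_nhdsWithin] with s hs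
  have hmax : max (f s) c - max (f t) c - (s - t) • max f' 0 =
      max (f s - c) 0 - max ((s - t) * f') 0 := by
    rw [hft, max_self, smul_eq_mul, mul_max_of_nonneg _ _ (sub_nonneg.2 hs), mul_zero,
      ← max_sub_sub_right, sub_self]
  rw [hmax, hft, smul_eq_mul, Real.norm_eq_abs, Real.norm_eq_abs]
  exact abs_max_sub_max_le_abs _ _ 0

lemma HasDerivAt.exists_hasDerivWithinAt_Ici_max_const {f : ℝ → ℝ} {f' t : ℝ}
    (hf : HasDerivAt f f' t) (c : ℝ) :
    ∃ D', HasDerivWithinAt (fun s => max (f s) c) D' (Ici t) t ∧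
      (D' = 0 ∧ f t ≤ c ∨ D' = f' ∧ c ≤ f t) := by
  rcases lt_trichotomy (f t) c with hlt | heq | hgt
  · refine ⟨0, (hasDerivWithinAt_const t _ c).congr_of_eventuallyEq ?_ (max_eq_right hlt.le),
      .inl ⟨rfl, hlt.le⟩⟩
    filter_upwards [nhdsWithin_le_nhds (hf.continuousAt.eventually_lt_const hlt)] with s hs
    exact max_eq_right hs.le
  · refine ⟨_, hf.hasDerivWithinAt_Ici_max_const_of_eq heq, ?_⟩
    rcases le_total f' 0 with h | h
    · exact .inl ⟨max_eq_right h, heq.le⟩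
    · exact .inr ⟨max_eq_left h, heq.ge⟩
  · refine ⟨f', hf.hasDerivWithinAt.congr_of_eventuallyEq ?_ (max_eq_left hgt.le),
      .inr ⟨rfl, hgt.le⟩⟩
    filter_upwards [nhdsWithin_le_nhds (hf.continuousAt.eventually_const_lt hgt)] with s hs
    exact max_eq_left hs.le

lemma HasDerivAt.exists_hasDerivWithinAt_Ici_div_max_one {T S : ℝ → ℝ} {T' S' t : ℝ}
    (hT : HasDerivAt T T' t) (hS : HasDerivAt S S' t) :
    ∃ y, HasDerivWithinAt (fun s => T s / max (S s) 1) y (Ici t) t ∧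
      (S t ≤ 1 ∧ y = T' ∨ 1 ≤ S t ∧ y = (T' * S t - T t * S') / S t ^ 2) := by
  obtain ⟨D', hD, hcase⟩ := hS.exists_hasDerivWithinAt_Ici_max_const 1
  refine ⟨_, hT.hasDerivWithinAt.div hD (zero_lt_one.trans_le (le_max_right _ _)).ne', ?_⟩
  rcases hcase with ⟨rfl, h⟩ | ⟨rfl, h⟩
  · exact .inl ⟨h, by rw [max_eq_right h]; ring⟩
  · exact .inr ⟨h, by rw [max_eq_left h]⟩

lemma sq_sum_mul_sub_sum_mul_sum_le {ι : Type*} [Fintype ι] (q v w : ι → ℝ)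
    (hq : ∀ p, 0 ≤ q p) :
    ((∑ p, q p) * ∑ p, q p * v p * w p - (∑ p, q p * v p) * ∑ p, q p * w p) ^ 2 ≤
      (∑ p, q p) ^ 2 * (∑ p, q p * v p ^ 2) * ∑ p, q p * w p ^ 2 := by
  set S := ∑ p, q p
  set V := ∑ p, q p * v p
  have hS : 0 ≤ S := sum_nonneg fun p _ => hq p
  have hcentre : S * ∑ p, q p * v p * w p - V * ∑ p, q p * w p =
      ∑ p, q p * (S * v p - V) * w p := by
    simp only [mul_sum, ← sum_sub_distrib]
    exact sum_congr rfl fun p _ => by ring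
  have hvar : ∑ p, q p * (S * v p - V) ^ 2 = S * (S * ∑ p, q p * v p ^ 2 - V ^ 2) := by
    calc ∑ p, q p * (S * v p - V) ^ 2
        = ∑ p, (S ^ 2 * (q p * v p ^ 2) - 2 * S * V * (q p * v p) + V ^ 2 * q p) :=
          sum_congr rfl fun p _ => by ring
      _ = _ := by rw [sum_add_distrib, sum_sub_distrib, ← mul_sum, ← mul_sum, ← mul_sum]; ring
  have hcs : (∑ p, q p * (S * v p - V) * w p) ^ 2 ≤
      (∑ p, q p * (S * v p - V) ^ 2) * ∑ p, q p * w p ^ 2 :=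
    sum_sq_le_sum_mul_sum_of_sq_le_mul _ (fun p _ => mul_nonneg (hq p) (sq_nonneg _))
      (fun p _ => mul_nonneg (hq p) (sq_nonneg _)) (fun p _ => le_of_eq (by ring))
  have hW : 0 ≤ ∑ p, q p * w p ^ 2 := sum_nonneg fun p _ => mul_nonneg (hq p) (sq_nonneg _)
  rw [hcentre]
  refine hcs.trans ?_
  rw [hvar]
  nlinarith [sq_nonneg V, mul_nonneg hS hW]

lemma norm_sub_le_of_hasDerivWithinAt_inner_le {E F : Type*} [NormedAddCommGroup E]
    [NormedSpace ℝ E] [NormedAddCommGroup F] [InnerProductSpace ℝ F] {g : E → F} {K : ℝ}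
    (hK : 0 ≤ K) (hcont : ∀ b d u, Continuous fun t : ℝ => ⟪g (b + t • d), u⟫)
    (hderiv : ∀ b d u (t : ℝ), ∃ y,
      HasDerivWithinAt (fun t : ℝ => ⟪g (b + t • d), u⟫) y (Ici t) t ∧ |y| ≤ K * ‖d‖ * ‖u‖)
    (x x' : E) : ‖g x - g x'‖ ≤ K * ‖x - x'‖ := by
  set u := g x - g x'
  choose y hy hyK using hderiv x' (x - x') u
  have hmvt := norm_image_sub_le_of_norm_deriv_right_le_segment
    (hcont x' (x - x') u).continuousOn (fun t _ => hy t)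
    (fun t _ => (Real.norm_eq_abs _).trans_le (hyK t)) 1 (right_mem_Icc.2 zero_le_one)
  have hu : ‖u‖ * ‖u‖ ≤ K * ‖x - x'‖ * ‖u‖ := by
    simpa [← real_inner_self_eq_norm_mul_norm, ← inner_sub_left, u] using hmvt
  rcases (norm_nonneg u).eq_or_lt with h0 | hpos
  · rw [← h0]; positivity
  · exact le_of_mul_le_mul_right hu hpos

namespace MKstar

noncomputable def phi (x : ℝ) : ℝ := if x ≤ 1 then x else log x + 1

lemma hasDerivAt_phi (x : ℝ) : HasDerivAt phi (max x 1)⁻¹ x := by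
  rcases lt_trichotomy x 1 with h | rfl | h
  · rw [max_eq_right h.le, inv_one]
    refine (hasDerivAt_id x).congr_of_eventuallyEq ?_
    filter_upwards [Iio_mem_nhds h] with y hy
    simp [phi, (mem_Iio.1 hy).le]
  · rw [max_self, inv_one]
    have hlog : HasDerivAt (fun y => log y + 1) 1 1 := by
      simpa using (hasDerivAt_log one_ne_zero).add_const 1
    have hleft : HasDerivWithinAt phi 1 (Iic 1) 1 :=
      (hasDerivAt_id 1).hasDerivWithinAt.congr (fun y hy => if_pos hy) (if_pos le_rfl)
    have hright : HasDerivWithinAt phi 1 (Ici 1) 1 := by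
      refine hlog.hasDerivWithinAt.congr (fun y hy => ?_) (by simp [phi])
      rcases (mem_Ici.1 hy).eq_or_lt with rfl | hy
      · simp [phi]
      · simp [phi, not_le.2 hy]
    simpa only [Iic_union_Ici, hasDerivWithinAt_univ] using hleft.union hright
  · rw [max_eq_left h.le]
    refine ((hasDerivAt_log (by positivity)).add_const 1).congr_of_eventuallyEq ?_
    filter_upwards [Ioi_mem_nhds h] with y hy
    simp [phi, not_le.2 (mem_Ioi.1 hy)]

variable {M : ℕ}

/-- The `p = (i, j)` coordinate of the paper's operator `L`. -/
noncomputable def pairSum (p : Fin M × Fin M) :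
    EuclideanSpace ℝ (Fin M ⊕ Fin M) →L[ℝ] ℝ :=
  EuclideanSpace.proj (Sum.inl p.1) + EuclideanSpace.proj (Sum.inr p.2)

@[simp]
lemma pairSum_apply (p : Fin M × Fin M) (a : EuclideanSpace ℝ (Fin M ⊕ Fin M)) :
    pairSum p a = a (Sum.inl p.1) + a (Sum.inr p.2) :=
  rfl

lemma sq_pairSum_le (a : EuclideanSpace ℝ (Fin M ⊕ Fin M)) (p : Fin M × Fin M) :
    pairSum p a ^ 2 ≤ 2 * ‖a‖ ^ 2 := by
  have hsplit : a (Sum.inl p.1) ^ 2 + a (Sum.inr p.2) ^ 2 ≤ ‖a‖ ^ 2 := by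
    rw [EuclideanSpace.norm_sq_eq, Fintype.sum_sum_type]
    simp only [Real.norm_eq_abs, sq_abs]
    exact add_le_add (single_le_sum (fun i _ => sq_nonneg (a (Sum.inl i))) (mem_univ p.1))
      (single_le_sum (fun j _ => sq_nonneg (a (Sum.inr j))) (mem_univ p.2))
  rw [pairSum_apply]
  nlinarith [sq_nonneg (a (Sum.inl p.1) - a (Sum.inr p.2))]

section Bounds

variable (q : Fin M × Fin M → ℝ) (d u : EuclideanSpace ℝ (Fin M ⊕ Fin M))

lemma abs_sum_mul_pairSum_mul_pairSum_le (hq : ∀ p, 0 ≤ q p) :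
    |∑ p, q p * pairSum p d * pairSum p u| ≤ 2 * (∑ p, q p) * ‖d‖ * ‖u‖ := by
  have hpoint (p : Fin M × Fin M) : |pairSum p d * pairSum p u| ≤ 2 * ‖d‖ * ‖u‖ := by
    refine abs_le_of_sq_le_sq ?_ (by positivity)
    calc (pairSum p d * pairSum p u) ^ 2 = pairSum p d ^ 2 * pairSum p u ^ 2 := mul_pow _ _ _
      _ ≤ (2 * ‖d‖ ^ 2) * (2 * ‖u‖ ^ 2) := by gcongr <;> exact sq_pairSum_le _ p
      _ = (2 * ‖d‖ * ‖u‖) ^ 2 := by ring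
  calc |∑ p, q p * pairSum p d * pairSum p u|
      ≤ ∑ p, q p * (2 * ‖d‖ * ‖u‖) := by
        refine (abs_sum_le_sum_abs _ _).trans (sum_le_sum fun p _ => ?_)
        rw [mul_assoc, abs_mul, abs_of_nonneg (hq p)]
        exact mul_le_mul_of_nonneg_left (hpoint p) (hq p)
    _ = 2 * (∑ p, q p) * ‖d‖ * ‖u‖ := by rw [← sum_mul]; ring

lemma abs_sum_mul_sum_mul_pairSum_sub_le (hq : ∀ p, 0 ≤ q p) :
    |(∑ p, q p) * ∑ p, q p * pairSum p d * pairSum p u -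
        (∑ p, q p * pairSum p d) * ∑ p, q p * pairSum p u| ≤
      2 * (∑ p, q p) ^ 2 * ‖d‖ * ‖u‖ := by
  have hsq (a : EuclideanSpace ℝ (Fin M ⊕ Fin M)) :
      ∑ p, q p * pairSum p a ^ 2 ≤ (∑ p, q p) * (2 * ‖a‖ ^ 2) := by
    rw [sum_mul]
    exact sum_le_sum fun p _ => mul_le_mul_of_nonneg_left (sq_pairSum_le a p) (hq p)
  refine abs_le_of_sq_le_sq ((sq_sum_mul_sub_sum_mul_sum_le q _ _ hq).trans ?_) (by positivity)
  have hS : 0 ≤ ∑ p, q p := sum_nonneg fun p _ => hq p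
  calc (∑ p, q p) ^ 2 * (∑ p, q p * pairSum p d ^ 2) * ∑ p, q p * pairSum p u ^ 2
      ≤ (∑ p, q p) ^ 2 * ((∑ p, q p) * (2 * ‖d‖ ^ 2)) *
          ((∑ p, q p) * (2 * ‖u‖ ^ 2)) := by
        gcongr
        · exact sum_nonneg fun p _ => mul_nonneg (hq p) (sq_nonneg _)
        · exact hsq d
        · exact hsq u
    _ = _ := by ring

end Bounds

variable (lam Nr : ℝ) (C : Matrix (Fin M) (Fin M) ℝ)

/-- The paper's `q_λ(β)`. -/
noncomputable def weight (β : EuclideanSpace ℝ (Fin M ⊕ Fin M)) (p : Fin M × Fin M) : ℝ :=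
  exp (lam * (pairSum p β - C p.1 p.2) - 1)

noncomputable def mass (β : EuclideanSpace ℝ (Fin M ⊕ Fin M)) : ℝ :=
  ∑ p, weight lam C β p

lemma weight_nonneg (β : EuclideanSpace ℝ (Fin M ⊕ Fin M)) (p : Fin M × Fin M) :
    0 ≤ weight lam C β p :=
  (exp_pos _).le

lemma MKstarLeN_eq_mul_phi : MKstarLeN M lam Nr C = fun β => Nr / lam * phi (mass lam C β) := by
  ext β
  have hdef : MKstarLeN M lam Nr C β = if mass lam C β ≤ 1 then Nr / lam * mass lam C β
      else Nr / lam * log (mass lam C β) + Nr / lam := by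
    rw [mass, Fintype.sum_prod_type]
    rfl
  rw [hdef, phi]
  split_ifs <;> ring

lemma MKstarGrad_apply_inl (β : EuclideanSpace ℝ (Fin M ⊕ Fin M)) (i : Fin M) :
    MKstarGrad M lam Nr C β (Sum.inl i) =
      Nr * (∑ j, weight lam C β (i, j)) / max (mass lam C β) 1 := by
  rw [← ite_le_one_div_eq_div_max, mass, Fintype.sum_prod_type]
  rfl

lemma MKstarGrad_apply_inr (β : EuclideanSpace ℝ (Fin M ⊕ Fin M)) (j : Fin M) :
    MKstarGrad M lam Nr C β (Sum.inr j) =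
      Nr * (∑ i, weight lam C β (i, j)) / max (mass lam C β) 1 := by
  rw [← ite_le_one_div_eq_div_max, mass, Fintype.sum_prod_type]
  rfl

lemma inner_MKstarGrad (β u : EuclideanSpace ℝ (Fin M ⊕ Fin M)) :
    ⟪MKstarGrad M lam Nr C β, u⟫ =
      Nr * (∑ p, weight lam C β p * pairSum p u) / max (mass lam C β) 1 := by
  simp only [PiLp.inner_apply, Fintype.sum_sum_type, MKstarGrad_apply_inl, MKstarGrad_apply_inr,
    RCLike.inner_apply, conj_trivial, pairSum_apply, mul_add, sum_add_distrib,
    Fintype.sum_prod_type]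
  rw [sum_comm (f := fun i j => weight lam C β (i, j) * u (Sum.inr j))]
  simp only [mul_sum, add_div, sum_div]
  congr 1 <;> exact sum_congr rfl fun _ _ => sum_congr rfl fun _ _ => by ring

lemma hasFDerivAt_weight (β : EuclideanSpace ℝ (Fin M ⊕ Fin M)) (p : Fin M × Fin M) :
    HasFDerivAt (fun β => weight lam C β p) ((lam * weight lam C β p) • pairSum p) β := by
  have hexp :=
    ((((pairSum p).hasFDerivAt (x := β)).sub_const (C p.1 p.2)).const_mul lam).sub_const 1 |>.exp
  rwa [smul_smul, mul_comm] at hexp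

lemma hasFDerivAt_mass (β : EuclideanSpace ℝ (Fin M ⊕ Fin M)) :
    HasFDerivAt (mass lam C) (∑ p, (lam * weight lam C β p) • pairSum p) β :=
  HasFDerivAt.fun_sum fun p _ => hasFDerivAt_weight lam C β p

lemma hasGradientAt_MKstarLeN (hlam : lam ≠ 0) (β : EuclideanSpace ℝ (Fin M ⊕ Fin M)) :
    HasGradientAt (MKstarLeN M lam Nr C) (MKstarGrad M lam Nr C β) β := by
  rw [hasGradientAt_iff_hasFDerivAt, MKstarLeN_eq_mul_phi]
  refine (((hasDerivAt_phi _).comp_hasFDerivAt β (hasFDerivAt_mass lam C β)).const_mul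
    (Nr / lam)).congr_fderiv ?_
  ext v
  rw [InnerProductSpace.toDual_apply_apply, inner_MKstarGrad]
  simp only [smul_apply, _root_.sum_apply, smul_eq_mul, mul_assoc, ← mul_sum]
  field_simp

section Line

variable (b d : EuclideanSpace ℝ (Fin M ⊕ Fin M)) (t : ℝ)

lemma hasDerivAt_weight_line (p : Fin M × Fin M) :
    HasDerivAt (fun t : ℝ => weight lam C (b + t • d) p)
      (lam * weight lam C (b + t • d) p * pairSum p d) t := by
  have := (hasFDerivAt_weight lam C (b + t • d) p).comp_hasDerivAt t
    (((hasDerivAt_id t).smul_const d).const_add b)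
  simp only [smul_apply, one_smul, smul_eq_mul] at this
  exact this

lemma hasDerivAt_mass_line :
    HasDerivAt (fun t : ℝ => mass lam C (b + t • d))
      (lam * ∑ p, weight lam C (b + t • d) p * pairSum p d) t := by
  rw [mul_sum]
  exact HasDerivAt.fun_sum fun p _ => by
    simpa only [mul_assoc] using hasDerivAt_weight_line lam C b d t p

lemma hasDerivAt_sum_weight_mul_line (w : Fin M × Fin M → ℝ) :
    HasDerivAt (fun t : ℝ => ∑ p, weight lam C (b + t • d) p * w p)
      (lam * ∑ p, weight lam C (b + t • d) p * pairSum p d * w p) t := by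
  rw [mul_sum]
  exact HasDerivAt.fun_sum fun p _ => by
    simpa only [mul_assoc] using (hasDerivAt_weight_line lam C b d t p).mul_const (w p)

end Line

lemma continuous_inner_MKstarGrad_line (b d u : EuclideanSpace ℝ (Fin M ⊕ Fin M)) :
    Continuous fun t : ℝ => ⟪MKstarGrad M lam Nr C (b + t • d), u⟫ := by
  simp only [inner_MKstarGrad]
  refine Continuous.div (continuous_const.mul ?_) ?_ fun t => ?_
  · exact continuous_iff_continuousAt.2 fun t =>
      (hasDerivAt_sum_weight_mul_line lam C b d t _).continuousAt
  · exact (continuous_iff_continuousAt.2 fun t =>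
      (hasDerivAt_mass_line lam C b d t).continuousAt).max continuous_const
  · exact (zero_lt_one.trans_le (le_max_right _ _)).ne'

lemma exists_hasDerivWithinAt_inner_MKstarGrad_line (hlam : 0 ≤ lam) (hN : 0 ≤ Nr)
    (b d u : EuclideanSpace ℝ (Fin M ⊕ Fin M)) (t : ℝ) :
    ∃ y, HasDerivWithinAt (fun t : ℝ => ⟪MKstarGrad M lam Nr C (b + t • d), u⟫) y
      (Ici t) t ∧ |y| ≤ 2 * lam * Nr * ‖d‖ * ‖u‖ := by
  simp only [inner_MKstarGrad]
  obtain ⟨y, hy, hcase⟩ := ((hasDerivAt_sum_weight_mul_line lam C b d t _).const_mul Nr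
    ).exists_hasDerivWithinAt_Ici_div_max_one (hasDerivAt_mass_line lam C b d t)
  refine ⟨y, hy, ?_⟩
  have hq := weight_nonneg lam C (b + t • d)
  have hNlam : 0 ≤ Nr * lam := mul_nonneg hN hlam
  set q := weight lam C (b + t • d)
  set S := mass lam C (b + t • d)
  set P := ∑ p, q p * pairSum p d * pairSum p u
  set V := ∑ p, q p * pairSum p d
  set W := ∑ p, q p * pairSum p u
  rcases hcase with ⟨hS, rfl⟩ | ⟨hS, rfl⟩
  · calc |Nr * (lam * P)| = Nr * lam * |P| := by rw [← mul_assoc, abs_mul, abs_of_nonneg hNlam]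
      _ ≤ Nr * lam * (2 * S * ‖d‖ * ‖u‖) := by
          gcongr
          exact abs_sum_mul_pairSum_mul_pairSum_le q d u hq
      _ ≤ Nr * lam * (2 * 1 * ‖d‖ * ‖u‖) := by gcongr
      _ = 2 * lam * Nr * ‖d‖ * ‖u‖ := by ring
  · have hS0 : 0 < S := zero_lt_one.trans_le hS
    calc |(Nr * (lam * P) * S - Nr * W * (lam * V)) / S ^ 2|
        = Nr * lam * |S * P - V * W| / S ^ 2 := by
          rw [show (Nr * (lam * P) * S - Nr * W * (lam * V)) / S ^ 2 =
            Nr * lam * (S * P - V * W) / S ^ 2 by ring, abs_div, abs_mul, abs_of_nonneg hNlam,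
            abs_of_pos (pow_pos hS0 2)]
      _ ≤ Nr * lam * (2 * S ^ 2 * ‖d‖ * ‖u‖) / S ^ 2 := by
          gcongr
          exact abs_sum_mul_sum_mul_pairSum_sub_le q d u hq
      _ = 2 * lam * Nr * ‖d‖ * ‖u‖ := by field_simp

end MKstar

/-- the gradient of `MK*_{λ,≤N}` is Lipschitz continuous with
constant at most `2λN`. -/
theorem stmt_12 (M : ℕ) (lam Nr : ℝ) (hlam : 0 < lam) (hN : 0 < Nr)
    (C : Matrix (Fin M) (Fin M) ℝ) :
    (∀ β : EuclideanSpace ℝ (Fin M ⊕ Fin M),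
      HasGradientAt (MKstarLeN M lam Nr C) (MKstarGrad M lam Nr C β) β) ∧
    ∀ β β' : EuclideanSpace ℝ (Fin M ⊕ Fin M),
      ‖MKstarGrad M lam Nr C β - MKstarGrad M lam Nr C β'‖ ≤
        2 * lam * Nr * ‖β - β'‖ :=
  ⟨MKstar.hasGradientAt_MKstarLeN lam Nr C hlam.ne',
    norm_sub_le_of_hasDerivWithinAt_inner_le (by positivity)
      (MKstar.continuous_inner_MKstarGrad_line lam Nr C)
      (MKstar.exists_hasDerivWithinAt_inner_MKstarGrad_line lam Nr C hlam.le hN.le)⟩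
end

section
/- Let g* (q) = (N/λ)⟨exp(λ(q − c) − 1), 1⟩ on ℝ^{M²}. Then for τ > 0 the proximity operator of τ·g (where g = (g*)* is the convex conjugate) is given componentwise by prox_{τg}(r)_k = (τ/λ) W((λ/τ) N exp(λ(r_k/τ − c_k) − 1)), where W is the Lambert W function (the unique real solution of w e^w = z for z ≥ 0). -/
/-!
Put `s := (r - p) / τ`. The Lambert-`W` equation `w e^w = z` defining the components of `p` is
exactly the first-order condition `p = ∇g*(s)`, i.e. `p_k = N exp(λ(s_k - c_k) - 1)`. By
`e^u ≥ 1 + u`, the concave function `q ↦ ⟨p, q⟩ - g*(q)` is then maximised at `s`, so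
`g(p) = ⟨p, s⟩ - g*(s)`, while `g(y) ≥ ⟨y, s⟩ - g*(s)` for all `y`. As `r = p + τ s`, expanding
the square gives `½‖y - r‖² + τ g(y) ≥ ½‖p - r‖² + τ g(p) + ½‖y - p‖²`.
-/

open Real
open scoped RealInnerProductSpace

section FenchelConjugate

variable {E : Type*} [NormedAddCommGroup E] [InnerProductSpace ℝ E]

noncomputable def fenchelConjugate (h : E → ℝ) (y : E) : EReal :=
  ⨆ q, ((⟪y, q⟫ - h q : ℝ) : EReal)

theorem inner_sub_le_fenchelConjugate (h : E → ℝ) (y q : E) :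
    ((⟪y, q⟫ - h q : ℝ) : EReal) ≤ fenchelConjugate h y :=
  le_iSup (fun q => ((⟪y, q⟫ - h q : ℝ) : EReal)) q

theorem fenchelConjugate_eq_of_forall_le {h : E → ℝ} {p s : E}
    (hs : ∀ q, ⟪p, q⟫ - h q ≤ ⟪p, s⟫ - h s) :
    fenchelConjugate h p = ((⟪p, s⟫ - h s : ℝ) : EReal) :=
  le_antisymm (iSup_le fun q => EReal.coe_le_coe (hs q)) (inner_sub_le_fenchelConjugate h p s)

theorem half_norm_sub_add_smul_sq_add_inner (τ : ℝ) (y p s : E) :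
    1 / 2 * ‖y - (p + τ • s)‖ ^ 2 + τ * ⟪y, s⟫ =
      1 / 2 * ‖p - (p + τ • s)‖ ^ 2 + τ * ⟪p, s⟫ + 1 / 2 * ‖y - p‖ ^ 2 := by
  rw [show y - (p + τ • s) = (y - p) - τ • s by abel, sub_add_cancel_left, norm_neg,
    norm_sub_sq_real, inner_smul_right, inner_sub_left, norm_smul, mul_pow, Real.norm_eq_abs,
    sq_abs]
  ring

theorem add_half_norm_sub_sq_le_prox_objective {h : E → ℝ} {τ : ℝ} (hτ : 0 ≤ τ) (p s y : E) :
    ((1 / 2 * ‖p - (p + τ • s)‖ ^ 2 + τ * (⟪p, s⟫ - h s) + 1 / 2 * ‖y - p‖ ^ 2 : ℝ) : EReal) ≤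
      ((1 / 2 * ‖y - (p + τ • s)‖ ^ 2 : ℝ) : EReal) + τ * fenchelConjugate h y := by
  have hy : ((τ * (⟪y, s⟫ - h s) : ℝ) : EReal) ≤ τ * fenchelConjugate h y := by
    rw [EReal.coe_mul]
    exact mul_le_mul_of_nonneg_left (inner_sub_le_fenchelConjugate h y s) (EReal.coe_nonneg.2 hτ)
  calc ((1 / 2 * ‖p - (p + τ • s)‖ ^ 2 + τ * (⟪p, s⟫ - h s) + 1 / 2 * ‖y - p‖ ^ 2 : ℝ) : EReal)
      = ((1 / 2 * ‖y - (p + τ • s)‖ ^ 2 : ℝ) : EReal) + ((τ * (⟪y, s⟫ - h s) : ℝ) : EReal) := by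
        rw [← EReal.coe_add]
        congr 1
        linear_combination (half_norm_sub_add_smul_sq_add_inner τ y p s).symm
    _ ≤ _ := add_le_add_right hy _

theorem prox_fenchelConjugate {h : E → ℝ} {τ : ℝ} (hτ : 0 ≤ τ) {r p s : E}
    (hr : p + τ • s = r) (hs : ∀ q, ⟪p, q⟫ - h q ≤ ⟪p, s⟫ - h s) :
    let Φ : E → EReal := fun y => ((1 / 2 * ‖y - r‖ ^ 2 : ℝ) : EReal) + τ * fenchelConjugate h y
    (∀ y, Φ p ≤ Φ y) ∧ (∀ y, Φ y ≤ Φ p → y = p) := by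
  intro Φ
  subst hr
  set m := 1 / 2 * ‖p - (p + τ • s)‖ ^ 2 + τ * (⟪p, s⟫ - h s) with hm
  have hΦp : Φ p = (m : EReal) := by
    simp only [Φ, m, fenchelConjugate_eq_of_forall_le hs, EReal.coe_add, EReal.coe_mul]
  refine ⟨fun y => ?_, fun y hy => ?_⟩
  · refine hΦp ▸ le_trans (EReal.coe_le_coe ?_) (add_half_norm_sub_sq_le_prox_objective hτ p s y)
    linarith [hm, sq_nonneg ‖y - p‖]
  · have hle := EReal.coe_le_coe_iff.1 <|
      (add_half_norm_sub_sq_le_prox_objective (h := h) hτ p s y).trans (hΦp ▸ hy)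
    have : ‖y - p‖ ^ 2 ≤ 0 := by linarith [hm]
    simpa [sub_eq_zero] using this

end FenchelConjugate

theorem mul_sub_div_mul_exp_le {lam : ℝ} (hlam : 0 < lam) {N : ℝ} (hN : 0 ≤ N) (c q s : ℝ) :
    N * exp (lam * (s - c) - 1) * q - N / lam * exp (lam * (q - c) - 1) ≤
      N * exp (lam * (s - c) - 1) * s - N / lam * exp (lam * (s - c) - 1) := by
  have hsplit : exp (lam * (q - c) - 1) = exp (lam * (s - c) - 1) * exp (lam * (q - s)) := by
    rw [← exp_add]; ring_nf
  have htangent := mul_le_mul_of_nonneg_left (add_one_le_exp (lam * (q - s)))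
    (by positivity : 0 ≤ N / lam * exp (lam * (s - c) - 1))
  rw [hsplit]
  field_simp at htangent ⊢
  linarith

theorem mul_exp_sub_eq_of_mul_exp_eq {lam τ N a w : ℝ} (hlam : lam ≠ 0) (hτ : τ ≠ 0)
    (hw : w * exp w = lam / τ * N * exp a) : N * exp (a - w) = τ / lam * w := by
  rw [exp_sub, mul_div_assoc', div_eq_iff (exp_ne_zero w), mul_assoc, hw]
  field_simp

theorem inner_sub_div_mul_sum_exp_le {ι : Type*} [Fintype ι] {lam : ℝ} (hlam : 0 < lam) {N : ℝ}
    (hN : 0 ≤ N) (c : ι → ℝ) {p s : EuclideanSpace ℝ ι}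
    (hp : ∀ k, p k = N * exp (lam * (s k - c k) - 1)) (q : EuclideanSpace ℝ ι) :
    ⟪p, q⟫ - N / lam * ∑ k, exp (lam * (q k - c k) - 1) ≤
      ⟪p, s⟫ - N / lam * ∑ k, exp (lam * (s k - c k) - 1) := by
  simp only [PiLp.inner_apply, RCLike.inner_apply, conj_trivial, Finset.mul_sum,
    ← Finset.sum_sub_distrib]
  refine Finset.sum_le_sum fun k _ => ?_
  rw [hp k, mul_comm (q k), mul_comm (s k)]
  exact mul_sub_div_mul_exp_le hlam hN (c k) (q k) (s k)

/-- let `g*(q) = (N/λ)⟨exp(λ(q−c)−1), 1⟩` and let `g = (g*)*` be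
its convex conjugate. Then for `τ > 0`, the proximity operator of `τ·g` at `r`
is the point with components `(τ/λ) W((λ/τ) N exp(λ(r_k/τ − c_k) − 1))`,
where `W` is the Lambert W function (unique real solution of `w e^w = z`,
`z ≥ 0`); i.e. this point is the unique minimizer of
`y ↦ ½‖y−r‖² + τ g(y)`. -/
theorem stmt_14 (K : ℕ) (lam Nr τ : ℝ) (hlam : 0 < lam) (hN : 0 < Nr)
    (hτ : 0 < τ) (c : Fin K → ℝ)
    (W : ℝ → ℝ)
    (hW : ∀ z : ℝ, 0 ≤ z → 0 ≤ W z ∧ W z * Real.exp (W z) = z)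
    (r : EuclideanSpace ℝ (Fin K)) :
    letI gstar : EuclideanSpace ℝ (Fin K) → ℝ := fun q =>
      (Nr / lam) * ∑ k, Real.exp (lam * (q k - c k) - 1)
    letI g : EuclideanSpace ℝ (Fin K) → EReal := fun y =>
      ⨆ q : EuclideanSpace ℝ (Fin K),
        (((∑ k, y k * q k : ℝ) : EReal) - ((gstar q : ℝ) : EReal))
    letI Φ : EuclideanSpace ℝ (Fin K) → EReal := fun y =>
      (((1 / 2) * ‖y - r‖ ^ 2 : ℝ) : EReal) + ((τ : ℝ) : EReal) * g y
    letI p : EuclideanSpace ℝ (Fin K) := WithLp.toLp 2 fun k =>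
      (τ / lam) * W ((lam / τ) * Nr * Real.exp (lam * (r k / τ - c k) - 1))
    (∀ y, Φ p ≤ Φ y) ∧ (∀ y, Φ y ≤ Φ p → y = p) := by
  beta_reduce
  set p : EuclideanSpace ℝ (Fin K) := WithLp.toLp 2 fun k =>
    (τ / lam) * W ((lam / τ) * Nr * Real.exp (lam * (r k / τ - c k) - 1))
  set s : EuclideanSpace ℝ (Fin K) := WithLp.toLp 2 fun k => (r k - p k) / τ
  have hr : p + τ • s = r := by
    ext k
    simp only [PiLp.add_apply, PiLp.smul_apply, smul_eq_mul, s]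
    field_simp
    ring
  have hp : ∀ k, p k = Nr * exp (lam * (s k - c k) - 1) := fun k => by
    set a := lam * (r k / τ - c k) - 1
    obtain ⟨-, hw⟩ := hW (lam / τ * Nr * exp a) (by positivity)
    have hexponent : lam * (s k - c k) - 1 = a - W (lam / τ * Nr * exp a) := by
      simp only [s, p, a]
      field_simp
      ring
    rw [hexponent, mul_exp_sub_eq_of_mul_exp_eq hlam.ne' hτ.ne' hw]
  have hpairing : ∀ y q : EuclideanSpace ℝ (Fin K), ∑ k, y k * q k = ⟪y, q⟫ := fun y q => by
    simp only [PiLp.inner_apply, RCLike.inner_apply, conj_trivial, mul_comm]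
  simp only [hpairing, ← EReal.coe_sub]
  exact prox_fenchelConjugate hτ.le hr (inner_sub_div_mul_sum_exp_le hlam hN.le c hp)
end

section
/- For τ > 0 and the function g*(q) = (N/λ) Σ_k exp(λ(q_k − c_k) − 1), the proximity operator is prox_{τg*}(p)_k = p_k − (1/λ) W(λτN exp(λ(p_k − c_k) − 1)), where W is the Lambert W function. -/
/-!
The objective `Φ q = ½‖q - p‖² + τ g*(q)` is separable, and each coordinate
`x ↦ ½(x - p)² + (a/λ) exp(λ(x - c) - 1)` is `1`-strongly convex. Its stationarity equation
`x - p + a exp(λ(x - c) - 1) = 0` becomes `w eʷ = λ a exp(λ(p - c) - 1)` under the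
substitution `x = p - w/λ`, so it is solved by the Lambert `W`. Strong convexity then gives
`Φ q⋆ + ½‖q - q⋆‖² ≤ Φ q`, which is both minimality and uniqueness.
-/

open Real

lemma forall_le_and_eq_of_add_half_norm_sq_le {E : Type*} [NormedAddCommGroup E]
    {Φ : E → ℝ} {x : E} (h : ∀ q, Φ x + (1 / 2) * ‖q - x‖ ^ 2 ≤ Φ q) :
    (∀ q, Φ x ≤ Φ q) ∧ (∀ q, Φ q ≤ Φ x → q = x) := by
  refine ⟨fun q => ?_, fun q hq => ?_⟩
  · nlinarith [h q, sq_nonneg ‖q - x‖]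
  · have hsq : ‖q - x‖ ^ 2 ≤ 0 := by linarith [h q]
    have hnorm : ‖q - x‖ = 0 := pow_eq_zero_iff two_ne_zero |>.mp
      (le_antisymm hsq (sq_nonneg _))
    exact sub_eq_zero.mp (norm_eq_zero.mp hnorm)

lemma EuclideanSpace.sum_add_half_norm_sq_le {ι : Type*} [Fintype ι] {f : ι → ℝ → ℝ}
    {x : EuclideanSpace ℝ ι} (h : ∀ i y, f i (x i) + (1 / 2) * (y - x i) ^ 2 ≤ f i y)
    (q : EuclideanSpace ℝ ι) :
    ∑ i, f i (x i) + (1 / 2) * ‖q - x‖ ^ 2 ≤ ∑ i, f i (q i) := by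
  rw [EuclideanSpace.real_norm_sq_eq, Finset.mul_sum, ← Finset.sum_add_distrib]
  exact Finset.sum_le_sum fun i _ => by simpa using h i (q i)

lemma mul_exp_sub_lambert_eq {lam a p c w : ℝ} (hlam : lam ≠ 0)
    (hw : w * exp w = lam * a * exp (lam * (p - c) - 1)) :
    a * exp (lam * (p - 1 / lam * w - c) - 1) = 1 / lam * w := by
  have hexp : exp (lam * (p - 1 / lam * w - c) - 1) = exp (lam * (p - c) - 1) * exp (-w) := by
    rw [← exp_add]
    congr 1
    field_simp
    ring
  have hscaled : a * exp (lam * (p - c) - 1) = w * exp w / lam := by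
    field_simp
    linear_combination -hw
  rw [hexp, ← mul_assoc, hscaled, div_mul_eq_mul_div, mul_assoc, ← exp_add, add_neg_cancel,
    exp_zero]
  ring

lemma add_half_sq_le_of_stationary {lam a p c xs : ℝ} (hlam : 0 < lam) (ha : 0 ≤ a)
    (hstat : a * exp (lam * (xs - c) - 1) = p - xs) (x : ℝ) :
    (1 / 2) * (xs - p) ^ 2 + a / lam * exp (lam * (xs - c) - 1) + (1 / 2) * (x - xs) ^ 2
      ≤ (1 / 2) * (x - p) ^ 2 + a / lam * exp (lam * (x - c) - 1) := by
  have htangent : exp (lam * (xs - c) - 1) * (lam * (x - xs) + 1) ≤ exp (lam * (x - c) - 1) := by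
    calc exp (lam * (xs - c) - 1) * (lam * (x - xs) + 1)
        ≤ exp (lam * (xs - c) - 1) * exp (lam * (x - xs)) := by
          gcongr
          exact add_one_le_exp _
      _ = exp (lam * (x - c) - 1) := by rw [← exp_add]; ring_nf
  have hscaled := mul_le_mul_of_nonneg_left htangent (div_nonneg ha hlam.le)
  have hexpand : a / lam * (exp (lam * (xs - c) - 1) * (lam * (x - xs) + 1))
      = a / lam * exp (lam * (xs - c) - 1) + (p - xs) * (x - xs) := by
    rw [← hstat]
    field_simp
    ring
  nlinarith [hscaled, hexpand]

/-- for `τ > 0` and `g*(q) = (N/λ) Σ_k exp(λ(q_k − c_k) − 1)`,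
the proximity operator of `τ g*` at `p` has components
`p_k − (1/λ) W(λτN exp(λ(p_k − c_k) − 1))`, with `W` the Lambert W function;
i.e. this point is the unique minimizer of `q ↦ ½‖q−p‖² + τ g*(q)`. -/
theorem stmt_15 (K : ℕ) (lam Nr τ : ℝ) (hlam : 0 < lam) (hN : 0 < Nr)
    (hτ : 0 < τ) (c : Fin K → ℝ)
    (W : ℝ → ℝ)
    (hW : ∀ z : ℝ, 0 ≤ z → 0 ≤ W z ∧ W z * Real.exp (W z) = z)
    (p : EuclideanSpace ℝ (Fin K)) :
    letI gstar : EuclideanSpace ℝ (Fin K) → ℝ := fun q =>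
      (Nr / lam) * ∑ k, Real.exp (lam * (q k - c k) - 1)
    letI Φ : EuclideanSpace ℝ (Fin K) → ℝ := fun q =>
      (1 / 2) * ‖q - p‖ ^ 2 + τ * gstar q
    letI qstar : EuclideanSpace ℝ (Fin K) := WithLp.toLp 2 fun k =>
      p k - (1 / lam) * W (lam * τ * Nr * Real.exp (lam * (p k - c k) - 1))
    (∀ q, Φ qstar ≤ Φ q) ∧ (∀ q, Φ q ≤ Φ qstar → q = qstar) := by
  beta_reduce
  set qstar : EuclideanSpace ℝ (Fin K) := WithLp.toLp 2 fun k =>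
    p k - 1 / lam * W (lam * τ * Nr * exp (lam * (p k - c k) - 1))
  set f : Fin K → ℝ → ℝ := fun k y =>
    (1 / 2) * (y - p k) ^ 2 + τ * Nr / lam * exp (lam * (y - c k) - 1)
  have hΦ : ∀ q : EuclideanSpace ℝ (Fin K),
      1 / 2 * ‖q - p‖ ^ 2 + τ * (Nr / lam * ∑ k, exp (lam * (q k - c k) - 1))
        = ∑ k, f k (q k) := by
    intro q
    simp only [f, EuclideanSpace.real_norm_sq_eq, PiLp.sub_apply, Finset.mul_sum,
      ← Finset.sum_add_distrib]
    exact Finset.sum_congr rfl fun k _ => by ring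
  have hcoord : ∀ k y, f k (qstar k) + (1 / 2) * (y - qstar k) ^ 2 ≤ f k y := by
    intro k y
    have hz : 0 ≤ lam * τ * Nr * exp (lam * (p k - c k) - 1) := by positivity
    have hstat := mul_exp_sub_lambert_eq (a := τ * Nr) hlam.ne' ((hW _ hz).2.trans (by ring))
    have hgrowth := add_half_sq_le_of_stationary hlam (by positivity) (x := y)
      (hstat.trans (by ring : _ = p k - (p k - 1 / lam * _)))
    simpa only [f, qstar, PiLp.toLp_apply] using hgrowth
  simpa only [hΦ] using forall_le_and_eq_of_add_half_norm_sq_le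
    (Φ := fun q : EuclideanSpace ℝ (Fin K) => ∑ k, f k (q k))
    (EuclideanSpace.sum_add_half_norm_sq_le hcoord)
end
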